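/- arXiv:2210.15613 — 4 statements merged into one kernel-verified Lean document; each statement's English description precedes it below -/
import Mathlib

section
/- Let (Ω,ℱ,P) be a probability space, 𝒢 ⊆ ℱ a sub-σ-algebra, and X a real random variable. Then X has a finite generalized conditional expectation given 𝒢 (i.e., there is a 𝒢-measurable version of E[X|𝒢] that is a.s. finite) if and only if there exists a 𝒢-measurable random variable K > 0 a.s. such that K·X is integrable; in that case E[X|𝒢] = E[KX|𝒢]/K a.s. -/
open MeasureTheory Filter Topology
open scoped ENNReal

namespace GCEAux

variable {Ω : Type*} [m : MeasurableSpace Ω]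

/-- truncation of the positive part -/
noncomputable def g (X : Ω → ℝ) (n : ℕ) : Ω → ℝ := fun ω => min (max (X ω) 0) (n : ℝ)

variable {X : Ω → ℝ}

omit m in
lemma g_nonneg (n : ℕ) (ω : Ω) : 0 ≤ g X n ω :=
  le_min (le_max_right _ _) (Nat.cast_nonneg n)

omit m in
lemma g_le (n : ℕ) (ω : Ω) : g X n ω ≤ max (X ω) 0 := min_le_left _ _

lemma g_meas (hX : Measurable[m] X) (n : ℕ) : Measurable[m] (g X n) :=
  (hX.max measurable_const).min measurable_const

omit m in
lemma g_mono (ω : Ω) : Monotone fun n => g X n ω := fun _ _ hab =>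
  min_le_min le_rfl (Nat.cast_le.2 hab)

omit m in
lemma g_tendsto (ω : Ω) : Tendsto (fun n => g X n ω) atTop (𝓝 (max (X ω) 0)) := by
  refine tendsto_const_nhds.congr' ?_
  filter_upwards [eventually_ge_atTop ⌈max (X ω) 0⌉₊] with n hn
  exact (min_eq_left ((Nat.le_ceil _).trans (Nat.cast_le.2 hn))).symm

lemma g_int {μ : Measure Ω} [IsFiniteMeasure μ] (hX : Measurable[m] X) (n : ℕ) :
    Integrable (g X n) μ := by
  refine Integrable.mono' (integrable_const (μ := μ) (n : ℝ))
    (g_meas (m := m) hX n).aestronglyMeasurable (ae_of_all _ fun ω => ?_)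
  rw [Real.norm_eq_abs, abs_of_nonneg (g_nonneg n ω)]
  exact min_le_right _ _

variable {μ : Measure Ω} [IsProbabilityMeasure μ]

/-- Main workhorse: a.e. convergence of the conditional expectations of the truncations
to `E[K X⁺|G]/K`. -/
lemma tendsto_condexp_trunc {G : MeasurableSpace Ω} (hG : G ≤ m) {K : Ω → ℝ}
    (hX : Measurable[m] X)
    (hK : Measurable[G] K) (hKpos : ∀ᵐ ω ∂μ, 0 < K ω)
    (hKX : Integrable (fun ω => K ω * max (X ω) 0) μ) :
    ∀ᵐ ω ∂μ, Tendsto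
      (fun n : ℕ => (condExp G μ (g X n)) ω)
      atTop (𝓝 ((condExp G μ fun ω' => K ω' * max (X ω') 0) ω / K ω)) := by
  have hKm : Measurable[m] K := hK.mono hG le_rfl
  set W := condExp G μ (fun ω => K ω * max (X ω) 0) with hW
  have hKg_int : ∀ n : ℕ, Integrable (fun ω => K ω * g X n ω) μ := by
    intro n
    refine Integrable.mono' hKX.abs ((hKm.mul (g_meas (m := m) hX n)).aestronglyMeasurable) ?_
    filter_upwards [hKpos] with ω hKω
    rw [Real.norm_eq_abs, abs_of_nonneg (mul_nonneg hKω.le (g_nonneg n ω))]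
    exact le_trans (mul_le_mul_of_nonneg_left (g_le n ω) hKω.le) (le_abs_self _)
  set Z : ℕ → Ω → ℝ := fun n => condExp G μ (fun ω => K ω * g X n ω) with hZ
  have hpull : ∀ n : ℕ, Z n =ᵐ[μ] fun ω => K ω * (condExp G μ (g X n)) ω := fun n =>
    condExp_mul_of_stronglyMeasurable_left hK.stronglyMeasurable (hKg_int n) (g_int (m := m) hX n)
  have hZ_mono : ∀ n : ℕ, Z n ≤ᵐ[μ] Z (n + 1) := by
    intro n
    refine condExp_mono (hKg_int n) (hKg_int (n + 1)) ?_
    filter_upwards [hKpos] with ω hKω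
    exact mul_le_mul_of_nonneg_left (g_mono ω (Nat.le_succ n)) hKω.le
  have hZ_le : ∀ n : ℕ, Z n ≤ᵐ[μ] W := by
    intro n
    refine condExp_mono (hKg_int n) hKX ?_
    filter_upwards [hKpos] with ω hKω
    exact mul_le_mul_of_nonneg_left (g_le n ω) hKω.le
  have hZint : ∀ n : ℕ, Integrable (Z n) μ := fun _ => integrable_condExp
  have hWint : Integrable W μ := integrable_condExp
  have hint_tend : Tendsto (fun n => ∫ ω, K ω * g X n ω ∂μ) atTop
      (𝓝 (∫ ω, K ω * max (X ω) 0 ∂μ)) := by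
    refine integral_tendsto_of_tendsto_of_monotone hKg_int hKX ?_ ?_
    · filter_upwards [hKpos] with ω hKω a b hab
      exact mul_le_mul_of_nonneg_left (g_mono ω hab) hKω.le
    · exact ae_of_all _ fun ω => (g_tendsto ω).const_mul _
  have hdiff : Tendsto (fun n => ∫ ω, (W ω - Z n ω) ∂μ) atTop (𝓝 0) := by
    have hiW : ∫ ω, W ω ∂μ = ∫ ω, K ω * max (X ω) 0 ∂μ := integral_condExp hG
    have hiZ : ∀ n : ℕ, ∫ ω, Z n ω ∂μ = ∫ ω, K ω * g X n ω ∂μ := fun n => integral_condExp hG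
    have h1 : ∀ n : ℕ, ∫ ω, (W ω - Z n ω) ∂μ
        = ∫ ω, K ω * max (X ω) 0 ∂μ - ∫ ω, K ω * g X n ω ∂μ := by
      intro n
      rw [integral_sub hWint (hZint n), hiW, hiZ n]
    simp_rw [h1]
    have := hint_tend.const_sub (∫ ω, K ω * max (X ω) 0 ∂μ)
    simpa using this
  have hFmeas : ∀ n : ℕ, Measurable[m] fun ω => ENNReal.ofReal (W ω - Z n ω) := by
    intro n
    exact ((stronglyMeasurable_condExp.mono hG).measurable.sub
      (stronglyMeasurable_condExp.mono hG).measurable).ennreal_ofReal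
  have hlin_tend : Tendsto (fun n => ∫⁻ ω, ENNReal.ofReal (W ω - Z n ω) ∂μ) atTop (𝓝 0) := by
    have heq : ∀ n : ℕ, ∫⁻ ω, ENNReal.ofReal (W ω - Z n ω) ∂μ
        = ENNReal.ofReal (∫ ω, (W ω - Z n ω) ∂μ) := by
      intro n
      refine (ofReal_integral_eq_lintegral_ofReal (hWint.sub (hZint n)) ?_).symm
      filter_upwards [hZ_le n] with ω hω
      simpa [sub_nonneg] using hω
    simp_rw [heq]
    have := (ENNReal.continuous_ofReal.tendsto 0).comp hdiff
    simpa [Function.comp_def] using this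
  have hliminf0 : ∀ᵐ ω ∂μ, liminf (fun n => ENNReal.ofReal (W ω - Z n ω)) atTop = 0 := by
    have hle := lintegral_liminf_le (μ := μ) (u := atTop) hFmeas
    rw [hlin_tend.liminf_eq] at hle
    have h0 : ∫⁻ ω, liminf (fun n => ENNReal.ofReal (W ω - Z n ω)) atTop ∂μ = 0 :=
      le_antisymm hle (zero_le)
    have hm' : Measurable[m] fun ω => liminf (fun n => ENNReal.ofReal (W ω - Z n ω)) atTop :=
      Measurable.liminf hFmeas
    filter_upwards [(lintegral_eq_zero_iff hm').mp h0] with ω hω using hω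
  filter_upwards [hKpos, ae_all_iff.2 hZ_mono, ae_all_iff.2 hZ_le, ae_all_iff.2 hpull,
    hliminf0] with ω hKω hmono hle hpw hlim0
  have hmono' : Monotone fun n => Z n ω := monotone_nat_of_le_succ fun n => hmono n
  have hbdd : BddAbove (Set.range fun n => Z n ω) := ⟨W ω, by rintro _ ⟨n, rfl⟩; exact hle n⟩
  have htendc : Tendsto (fun n => Z n ω) atTop (𝓝 (⨆ n, Z n ω)) :=
    tendsto_atTop_ciSup hmono' hbdd
  have hc_le : (⨆ n, Z n ω) ≤ W ω := ciSup_le fun n => hle n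
  have htendF : Tendsto (fun n => ENNReal.ofReal (W ω - Z n ω)) atTop
      (𝓝 (ENNReal.ofReal (W ω - ⨆ n, Z n ω))) :=
    (ENNReal.continuous_ofReal.tendsto _).comp (tendsto_const_nhds.sub htendc)
  have h0 : ENNReal.ofReal (W ω - ⨆ n, Z n ω) = 0 := by
    rw [← htendF.liminf_eq]; exact hlim0
  have hWc : W ω = ⨆ n, Z n ω := by
    have := ENNReal.ofReal_eq_zero.mp h0
    linarith [hc_le]
  have htendW : Tendsto (fun n => Z n ω) atTop (𝓝 (W ω)) := hWc ▸ htendc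
  have : Tendsto (fun n => Z n ω / K ω) atTop (𝓝 (W ω / K ω)) := htendW.div_const _
  refine this.congr fun n => ?_
  rw [hpw n]
  field_simp

end GCEAux

namespace GCEAux
open GCEAux

variable {Ω : Type*} [m : MeasurableSpace Ω] {X : Ω → ℝ} {μ : Measure Ω} [IsProbabilityMeasure μ]

lemma lintegral_bound {G : MeasurableSpace Ω} (hG : G ≤ m) {K Y : Ω → ℝ}
    (hX : Measurable[m] X) (hK : Measurable[G] K)
    (hK0 : ∀ ω, 0 < K ω) (hK1 : ∀ ω, K ω ≤ 1) (hKY : ∀ ω, K ω * Y ω ≤ 1)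
    (hY : ∀ᵐ ω ∂μ, Tendsto (fun n : ℕ => (condExp G μ (g X n)) ω) atTop (𝓝 (Y ω))) :
    ∫⁻ ω, ENNReal.ofReal (K ω * max (X ω) 0) ∂μ ≤ 1 := by
  have hKm : Measurable[m] K := hK.mono hG le_rfl
  have hKg_int : ∀ n : ℕ, Integrable (fun ω => K ω * g X n ω) μ := by
    intro n
    refine Integrable.mono' (integrable_const (μ := μ) (n : ℝ))
      ((hKm.mul (g_meas (m := m) hX n)).aestronglyMeasurable) (ae_of_all _ fun ω => ?_)
    rw [Real.norm_eq_abs, abs_of_nonneg (mul_nonneg (hK0 ω).le (g_nonneg n ω))]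
    calc K ω * g X n ω ≤ 1 * g X n ω :=
          mul_le_mul_of_nonneg_right (hK1 ω) (g_nonneg n ω)
      _ = g X n ω := one_mul _
      _ ≤ (n : ℝ) := min_le_right _ _
  have hpull : ∀ n : ℕ, condExp G μ (fun ω => K ω * g X n ω)
      =ᵐ[μ] fun ω => K ω * (condExp G μ (g X n)) ω := fun n =>
    condExp_mul_of_stronglyMeasurable_left hK.stronglyMeasurable (hKg_int n) (g_int (m := m) hX n)
  have hcmono : ∀ n : ℕ, condExp G μ (g X n) ≤ᵐ[μ] condExp G μ (g X (n + 1)) := fun n =>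
    condExp_mono (g_int (m := m) hX n) (g_int (m := m) hX (n + 1))
      (ae_of_all _ fun ω => g_mono ω (Nat.le_succ n))
  have hle : ∀ᵐ ω ∂μ, ∀ n : ℕ, (condExp G μ (g X n)) ω ≤ Y ω := by
    filter_upwards [hY, ae_all_iff.2 hcmono] with ω hty hmono n
    exact (monotone_nat_of_le_succ hmono).ge_of_tendsto hty n
  have h1 : ∀ n : ℕ, ∫ ω, K ω * g X n ω ∂μ ≤ 1 := by
    intro n
    have e1 : ∫ ω, K ω * g X n ω ∂μ = ∫ ω, K ω * (condExp G μ (g X n)) ω ∂μ := by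
      rw [← integral_condExp hG (f := fun ω => K ω * g X n ω)]
      exact integral_congr_ae (hpull n)
    rw [e1]
    have hint : Integrable (fun ω => K ω * (condExp G μ (g X n)) ω) μ :=
      integrable_condExp.congr (hpull n)
    calc ∫ ω, K ω * (condExp G μ (g X n)) ω ∂μ ≤ ∫ _ω, (1 : ℝ) ∂μ := by
          refine integral_mono_ae hint (integrable_const 1) ?_
          filter_upwards [hle] with ω hω
          calc K ω * (condExp G μ (g X n)) ω ≤ K ω * Y ω :=
                mul_le_mul_of_nonneg_left (hω n) (hK0 ω).le
            _ ≤ 1 := hKY ω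
      _ = 1 := by simp
  have h2 : ∀ n : ℕ, ∫⁻ ω, ENNReal.ofReal (K ω * g X n ω) ∂μ ≤ 1 := by
    intro n
    rw [← ofReal_integral_eq_lintegral_ofReal (hKg_int n)
      (ae_of_all _ fun ω => mul_nonneg (hK0 ω).le (g_nonneg n ω))]
    exact ENNReal.ofReal_le_one.2 (h1 n)
  have hmct : Tendsto (fun n => ∫⁻ ω, ENNReal.ofReal (K ω * g X n ω) ∂μ) atTop
      (𝓝 (∫⁻ ω, ENNReal.ofReal (K ω * max (X ω) 0) ∂μ)) := by
    refine lintegral_tendsto_of_tendsto_of_monotone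
      (fun n => ((hKm.mul (g_meas (m := m) hX n)).ennreal_ofReal).aemeasurable) ?_ ?_
    · refine ae_of_all _ fun ω a b hab => ?_
      exact ENNReal.ofReal_le_ofReal
        (mul_le_mul_of_nonneg_left (g_mono ω hab) (hK0 ω).le)
    · refine ae_of_all _ fun ω => ?_
      exact (ENNReal.continuous_ofReal.tendsto _).comp ((g_tendsto ω).const_mul _)
  exact le_of_tendsto' hmct h2

end GCEAux

open GCEAux in
/-- **Finiteness of the generalized conditional expectation.**
`X` has a finite generalized conditional expectation given `G` (i.e. the conditional
expectations of the truncations `X⁺ ∧ n` and `X⁻ ∧ n` converge a.s. to finite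
`G`-measurable limits `Yp`, `Ym`) if and only if there is a `G`-measurable `K > 0` a.s.
with `K·X` integrable; in that case `E[X|G] = Yp − Ym = E[KX|G]/K` a.s. -/
theorem generalized_condexp_finite_iff {Ω : Type*} (G : MeasurableSpace Ω) [m : MeasurableSpace Ω]
    (μ : Measure Ω) [IsProbabilityMeasure μ] (hG : G ≤ m)
    (X : Ω → ℝ) (hX : Measurable X) :
    ((∃ Yp Ym : Ω → ℝ, Measurable[G] Yp ∧ Measurable[G] Ym ∧
        (∀ᵐ ω ∂μ, Tendsto
          (fun n : ℕ => (MeasureTheory.condExp G μ fun ω' => min (max (X ω') 0) (n : ℝ)) ω)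
          atTop (𝓝 (Yp ω))) ∧
        (∀ᵐ ω ∂μ, Tendsto
          (fun n : ℕ => (MeasureTheory.condExp G μ fun ω' => min (max (-X ω') 0) (n : ℝ)) ω)
          atTop (𝓝 (Ym ω)))) ↔
      (∃ K : Ω → ℝ, Measurable[G] K ∧ (∀ᵐ ω ∂μ, 0 < K ω) ∧
        Integrable (fun ω => K ω * X ω) μ)) ∧
    (∀ K Yp Ym : Ω → ℝ, Measurable[G] K → (∀ᵐ ω ∂μ, 0 < K ω) →
      Integrable (fun ω => K ω * X ω) μ →
      (∀ᵐ ω ∂μ, Tendsto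
        (fun n : ℕ => (MeasureTheory.condExp G μ fun ω' => min (max (X ω') 0) (n : ℝ)) ω)
        atTop (𝓝 (Yp ω))) →
      (∀ᵐ ω ∂μ, Tendsto
        (fun n : ℕ => (MeasureTheory.condExp G μ fun ω' => min (max (-X ω') 0) (n : ℝ)) ω)
        atTop (𝓝 (Ym ω))) →
      (fun ω => Yp ω - Ym ω) =ᵐ[μ]
        fun ω => (MeasureTheory.condExp G μ fun ω' => K ω' * X ω') ω / K ω) := by
  have hXm : Measurable[m] X := hX
  -- integrability of `K·X⁺` and `K·X⁻` from integrability of `K·X`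
  have keyInt : ∀ {K : Ω → ℝ}, Measurable[G] K → (∀ᵐ ω ∂μ, 0 < K ω) →
      Integrable (fun ω => K ω * X ω) μ →
      Integrable (fun ω => K ω * max (X ω) 0) μ ∧
        Integrable (fun ω => K ω * max (-X ω) 0) μ := by
    intro K hK hKpos hKX
    have hKm : Measurable[m] K := hK.mono hG le_rfl
    constructor
    · refine Integrable.mono' hKX.abs
        ((hKm.mul (hXm.max measurable_const)).aestronglyMeasurable) ?_
      filter_upwards [hKpos] with ω hKω
      rw [Real.norm_eq_abs, abs_of_nonneg (mul_nonneg hKω.le (le_max_right _ _)),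
        abs_mul, abs_of_pos hKω]
      exact mul_le_mul_of_nonneg_left (max_le (le_abs_self _) (abs_nonneg _)) hKω.le
    · refine Integrable.mono' hKX.abs
        ((hKm.mul (hXm.neg.max measurable_const)).aestronglyMeasurable) ?_
      filter_upwards [hKpos] with ω hKω
      rw [Real.norm_eq_abs, abs_of_nonneg (mul_nonneg hKω.le (le_max_right _ _)),
        abs_mul, abs_of_pos hKω]
      exact mul_le_mul_of_nonneg_left
        (max_le (neg_le_abs _) (abs_nonneg _)) hKω.le
  -- the two a.e. convergence statements from Lemma A
  have keyT : ∀ {K : Ω → ℝ}, Measurable[G] K → (∀ᵐ ω ∂μ, 0 < K ω) →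
      Integrable (fun ω => K ω * X ω) μ →
      (∀ᵐ ω ∂μ, Tendsto
        (fun n : ℕ => (MeasureTheory.condExp G μ fun ω' => min (max (X ω') 0) (n : ℝ)) ω)
        atTop (𝓝 ((condExp G μ fun ω' => K ω' * max (X ω') 0) ω / K ω))) ∧
      (∀ᵐ ω ∂μ, Tendsto
        (fun n : ℕ => (MeasureTheory.condExp G μ fun ω' => min (max (-X ω') 0) (n : ℝ)) ω)
        atTop (𝓝 ((condExp G μ fun ω' => K ω' * max (-X ω') 0) ω / K ω))) := by
    intro K hK hKpos hKX
    obtain ⟨hp, hm'⟩ := keyInt hK hKpos hKX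
    exact ⟨tendsto_condexp_trunc (m := m) hG hXm hK hKpos hp,
      tendsto_condexp_trunc (m := m) hG hXm.neg hK hKpos hm'⟩
  constructor
  · constructor
    · -- forward: construct K from Yp, Ym
      rintro ⟨Yp, Ym, hYp, hYm, htp, htm⟩
      set d : Ω → ℝ := fun ω => 1 + max (Yp ω) 0 + max (Ym ω) 0 with hd
      have hd1 : ∀ ω, 1 ≤ d ω := fun ω => by
        simp only [hd]
        have := le_max_right (Yp ω) 0
        have := le_max_right (Ym ω) 0
        linarith
      have hd0 : ∀ ω, 0 < d ω := fun ω => lt_of_lt_of_le one_pos (hd1 ω)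
      refine ⟨fun ω => (d ω)⁻¹, ?_, ?_, ?_⟩
      · exact ((measurable_const.add (hYp.max measurable_const)).add
          (hYm.max measurable_const)).inv
      · exact ae_of_all _ fun ω => inv_pos.2 (hd0 ω)
      · have hK0 : ∀ ω, 0 < (d ω)⁻¹ := fun ω => inv_pos.2 (hd0 ω)
        have hK1 : ∀ ω, (d ω)⁻¹ ≤ 1 := fun ω => inv_le_one_of_one_le₀ (hd1 ω)
        have hKd : ∀ ω, (d ω)⁻¹ * d ω = 1 := fun ω => inv_mul_cancel₀ (hd0 ω).ne'
        have hKYp : ∀ ω, (d ω)⁻¹ * Yp ω ≤ 1 := by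
          intro ω
          have h1 : Yp ω ≤ d ω := by
            have := le_max_left (Yp ω) 0
            have := le_max_right (Ym ω) 0
            simp only [hd]; linarith
          calc (d ω)⁻¹ * Yp ω ≤ (d ω)⁻¹ * d ω :=
                mul_le_mul_of_nonneg_left h1 (hK0 ω).le
            _ = 1 := hKd ω
        have hKYm : ∀ ω, (d ω)⁻¹ * Ym ω ≤ 1 := by
          intro ω
          have h1 : Ym ω ≤ d ω := by
            have := le_max_left (Ym ω) 0
            have := le_max_right (Yp ω) 0
            simp only [hd]; linarith
          calc (d ω)⁻¹ * Ym ω ≤ (d ω)⁻¹ * d ω :=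
                mul_le_mul_of_nonneg_left h1 (hK0 ω).le
            _ = 1 := hKd ω
        have hKmeasG : Measurable[G] fun ω => (d ω)⁻¹ :=
          ((measurable_const.add (hYp.max measurable_const)).add
            (hYm.max measurable_const)).inv
        have hKmeas : Measurable[m] fun ω => (d ω)⁻¹ := hKmeasG.mono hG le_rfl
        have b1 : ∫⁻ ω, ENNReal.ofReal ((d ω)⁻¹ * max (X ω) 0) ∂μ ≤ 1 :=
          lintegral_bound (m := m) hG hXm hKmeasG hK0 hK1 hKYp htp
        have b2 : ∫⁻ ω, ENNReal.ofReal ((d ω)⁻¹ * max (-X ω) 0) ∂μ ≤ 1 :=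
          lintegral_bound (m := m) hG hXm.neg hKmeasG hK0 hK1 hKYm htm
        refine ⟨(hKmeas.mul hXm).aestronglyMeasurable, ?_⟩
        rw [hasFiniteIntegral_iff_norm]
        have heq : ∀ ω, ENNReal.ofReal ‖(d ω)⁻¹ * X ω‖
            = ENNReal.ofReal ((d ω)⁻¹ * max (X ω) 0)
              + ENNReal.ofReal ((d ω)⁻¹ * max (-X ω) 0) := by
          intro ω
          rw [← ENNReal.ofReal_add (mul_nonneg (hK0 ω).le (le_max_right _ _))
            (mul_nonneg (hK0 ω).le (le_max_right _ _)), ← mul_add,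
            max_zero_add_max_neg_zero_eq_abs_self, Real.norm_eq_abs, abs_mul,
            abs_of_pos (hK0 ω)]
        calc ∫⁻ ω, ENNReal.ofReal ‖(d ω)⁻¹ * X ω‖ ∂μ
            = ∫⁻ ω, (ENNReal.ofReal ((d ω)⁻¹ * max (X ω) 0)
              + ENNReal.ofReal ((d ω)⁻¹ * max (-X ω) 0)) ∂μ :=
              lintegral_congr fun ω => heq ω
          _ = (∫⁻ ω, ENNReal.ofReal ((d ω)⁻¹ * max (X ω) 0) ∂μ)
              + ∫⁻ ω, ENNReal.ofReal ((d ω)⁻¹ * max (-X ω) 0) ∂μ :=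
              lintegral_add_left ((hKmeas.mul (hXm.max measurable_const)).ennreal_ofReal) _
          _ ≤ 1 + 1 := add_le_add b1 b2
          _ < ⊤ := by norm_num
    · -- backward: construct Yp, Ym from K
      rintro ⟨K, hK, hKpos, hKX⟩
      obtain ⟨hp, hm'⟩ := keyT hK hKpos hKX
      refine ⟨fun ω => (condExp G μ fun ω' => K ω' * max (X ω') 0) ω / K ω,
        fun ω => (condExp G μ fun ω' => K ω' * max (-X ω') 0) ω / K ω,
        (stronglyMeasurable_condExp.measurable).div hK,
        (stronglyMeasurable_condExp.measurable).div hK, hp, hm'⟩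
  · -- the identity
    intro K Yp Ym hK hKpos hKX htp htm
    obtain ⟨hp, hm'⟩ := keyT hK hKpos hKX
    obtain ⟨hKXp, hKXm⟩ := keyInt hK hKpos hKX
    have hYpeq : ∀ᵐ ω ∂μ, Yp ω
        = (condExp G μ fun ω' => K ω' * max (X ω') 0) ω / K ω := by
      filter_upwards [htp, hp] with ω h1 h2 using tendsto_nhds_unique h1 h2
    have hYmeq : ∀ᵐ ω ∂μ, Ym ω
        = (condExp G μ fun ω' => K ω' * max (-X ω') 0) ω / K ω := by
      filter_upwards [htm, hm'] with ω h1 h2 using tendsto_nhds_unique h1 h2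
    have hfun : (fun ω => K ω * X ω)
        = fun ω => K ω * max (X ω) 0 - K ω * max (-X ω) 0 := by
      funext ω
      rw [← mul_sub, max_zero_sub_eq_self]
    have hsub : condExp G μ (fun ω => K ω * X ω) =ᵐ[μ]
        fun ω => (condExp G μ fun ω' => K ω' * max (X ω') 0) ω
          - (condExp G μ fun ω' => K ω' * max (-X ω') 0) ω := by
      rw [hfun]
      exact condExp_sub hKXp hKXm G
    filter_upwards [hYpeq, hYmeq, hsub] with ω h1 h2 h3
    rw [h1, h2, h3, sub_div]
end

section
/- Let (Ω,ℱ,(ℱ_t)_{t∈[0,T]},P) be a filtered probability space satisfying the usual conditions, let σ be a predictable stopping time with announcing sequence (σₙ), and let Z = (Z_t)_{0≤t≤T} be a càdlàg locally square-integrable martingale with Z₀ = 1. Let σ₀ := inf{t>0 : Z_t = 0} and suppose that for every n, E[(Z_T/Z_{σₙ})² | ℱ_{σₙ}] ≤ C on {Z_{σₙ} ≠ 0} for an a.s. finite random variable C. If additionally E[Z_T/Z_{σₙ} | ℱ_{σₙ}] = 1 on {Z_{σₙ} ≠ 0}, then P(Z_{σ−} = 0, Z_{σₙ} ≠ 0 ∀n)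 = 0. -/
set_option maxHeartbeats 1000000


open MeasureTheory Filter Topology
open scoped ENNReal NNReal

/-- Generalized conditional expectation of a (nonnegative) random variable given the
σ-algebra `G`, defined as the monotone limit of conditional expectations of truncations. -/
noncomputable def genCEnn {Ω : Type*} (G : MeasurableSpace Ω) {mΩ : MeasurableSpace Ω}
    (μ : Measure Ω) (f : Ω → ℝ) : Ω → ℝ≥0∞ :=
  fun ω => ⨆ n : ℕ, ENNReal.ofReal
    ((MeasureTheory.condExp G μ (fun ω' => min (f ω') (n : ℝ))) ω)

/-- Generalized (signed) conditional expectation given `G`: difference of the generalized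
conditional expectations of the positive and negative parts. -/
noncomputable def genCE {Ω : Type*} (G : MeasurableSpace Ω) {mΩ : MeasurableSpace Ω}
    (μ : Measure Ω) (f : Ω → ℝ) : Ω → ℝ :=
  fun ω => (genCEnn G μ (fun ω' => max (f ω') 0) ω).toReal
    - (genCEnn G μ (fun ω' => max (-f ω') 0) ω).toReal

lemma aux_progMeasurable {Ω : Type*} {m : MeasurableSpace Ω}
    (f : Filtration ℝ≥0 m) (Z : ℝ≥0 → Ω → ℝ) (hadapted : Adapted f Z)
    (hrc : ∀ ω t, ContinuousWithinAt (fun s => Z s ω) (Set.Ici t) t) :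
    ProgMeasurable f Z := by
  intro i
  letI : MeasurableSpace Ω := f i
  show StronglyMeasurable fun p : Set.Iic i × Ω => Z p.1 p.2
  -- dyadic approximation from the right
  set d : ℕ → ℝ≥0 → ℝ≥0 := fun k s => min i ((⌈s * 2 ^ k⌉₊ : ℝ≥0) / 2 ^ k) with hd
  have h2k : ∀ k : ℕ, (0 : ℝ≥0) < 2 ^ k := fun k => pow_pos (by norm_num) k
  have hdk_ge : ∀ (k : ℕ) (s : ℝ≥0), s ≤ i → s ≤ d k s := by
    intro k s hs
    refine le_min hs ?_
    rw [le_div_iff₀ (h2k k)]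
    exact Nat.le_ceil _
  have hdk_le : ∀ (k : ℕ) (s : ℝ≥0), s ≤ i → d k s ≤ s + (2 ^ k)⁻¹ := by
    intro k s _
    refine (min_le_right _ _).trans ?_
    rw [div_le_iff₀ (h2k k)]
    calc (⌈s * 2 ^ k⌉₊ : ℝ≥0) ≤ s * 2 ^ k + 1 := (Nat.ceil_lt_add_one zero_le).le
    _ = (s + (2 ^ k)⁻¹) * 2 ^ k := by
        rw [add_mul, inv_mul_cancel₀ (h2k k).ne']
  have hdk_tendsto : ∀ s : ℝ≥0, s ≤ i →
      Tendsto (fun k => d k s) atTop (𝓝 s) := by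
    intro s hs
    have h1 : Tendsto (fun k : ℕ => s + ((2 : ℝ≥0) ^ k)⁻¹) atTop (𝓝 (s + 0)) := by
      refine tendsto_const_nhds.add ?_
      simp only [← inv_pow]
      exact NNReal.tendsto_pow_atTop_nhds_zero_of_lt_one two_inv_lt_one
    rw [add_zero] at h1
    exact tendsto_of_tendsto_of_tendsto_of_le_of_le tendsto_const_nhds h1
      (fun k => hdk_ge k s hs) (fun k => hdk_le k s hs)
  -- each approximation is strongly measurable
  have hUk : ∀ k : ℕ, StronglyMeasurable fun p : Set.Iic i × Ω => Z (d k p.1) p.2 := by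
    intro k
    set e : ℕ → ℝ≥0 := fun j => min i ((j : ℝ≥0) / 2 ^ k) with he
    have hc : Measurable fun p : Set.Iic i × Ω => ⌈(p.1 : ℝ≥0) * 2 ^ k⌉₊ :=
      ((measurable_subtype_coe.comp measurable_fst).mul_const _).nat_ceil
    have hWN : ∀ N : ℕ, StronglyMeasurable fun p : Set.Iic i × Ω =>
        ∑ j ∈ Finset.range N,
          Set.indicator {q : Set.Iic i × Ω | ⌈(q.1 : ℝ≥0) * 2 ^ k⌉₊ = j}
            (fun q => Z (e j) q.2) p := by
      intro N
      refine Finset.stronglyMeasurable_fun_sum _ (fun j _ => ?_)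
      refine StronglyMeasurable.indicator ?_ (hc (measurableSet_singleton j))
      exact ((hadapted (e j)).mono (f.mono (min_le_left _ _)) le_rfl).stronglyMeasurable.comp_measurable measurable_snd
    refine stronglyMeasurable_of_tendsto atTop hWN ?_
    rw [tendsto_pi_nhds]
    intro p
    refine tendsto_const_nhds.congr' ?_
    filter_upwards [eventually_ge_atTop (⌈(p.1 : ℝ≥0) * 2 ^ k⌉₊ + 1)] with N hN
    rw [Finset.sum_eq_single_of_mem (⌈(p.1 : ℝ≥0) * 2 ^ k⌉₊)
      (Finset.mem_range.2 (by omega))]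
    · rw [Set.indicator_of_mem
        (show p ∈ {q : Set.Iic i × Ω |
          ⌈(q.1 : ℝ≥0) * 2 ^ k⌉₊ = ⌈(p.1 : ℝ≥0) * 2 ^ k⌉₊} from rfl)]
    · intro j _ hj
      exact Set.indicator_of_notMem (by simpa using (Ne.symm hj)) _
  refine stronglyMeasurable_of_tendsto atTop hUk ?_
  rw [tendsto_pi_nhds]
  intro p
  have hmem : (p.1 : ℝ≥0) ≤ i := p.1.2
  have h1 : Tendsto (fun k => d k p.1) atTop (𝓝[Set.Ici (p.1 : ℝ≥0)] (p.1 : ℝ≥0)) :=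
    tendsto_nhdsWithin_of_tendsto_nhds_of_eventually_within _
      (hdk_tendsto _ hmem) (Eventually.of_forall fun k => hdk_ge k _ hmem)
  exact (hrc p.2 p.1).tendsto.comp h1

lemma integrable_bdd {Ω : Type*} {m : MeasurableSpace Ω} {μ : Measure Ω}
    [IsFiniteMeasure μ] {g : Ω → ℝ} (hg : AEStronglyMeasurable g μ) {c : ℝ}
    (hb : ∀ ω, ‖g ω‖ ≤ c) : Integrable g μ :=
  (MemLp.of_bound hg c (Eventually.of_forall hb)).integrable le_rfl

/-- **A conditionally `L²`-bounded density cannot approach zero continuously at a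
predictable time** (key step of Proposition 4.2). Let `Z` be a càdlàg locally
square-integrable martingale with `Z₀ = 1`, let `σ` be a predictable stopping time (given
with an announcing sequence `(σₙ)`), and suppose the restarted normalized densities
satisfy `E[Z_T/Z_{σₙ} | ℱ_{σₙ}] = 1` and `E[(Z_T/Z_{σₙ})² | ℱ_{σₙ}] ≤ C < ∞` on
`{Z_{σₙ} ≠ 0}`. Then a.s. it cannot happen that `Z_{σ−} = 0` while `Z_{σₙ} ≠ 0` for
every `n`. -/
theorem no_continuous_approach_to_zero {Ω : Type*} [m : MeasurableSpace Ω]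
    (μ : Measure Ω) [IsProbabilityMeasure μ] (f : Filtration ℝ≥0 m) (T : ℝ≥0)
    (Z : ℝ≥0 → Ω → ℝ) (hadapted : Adapted f Z) (hZ0 : ∀ ω, Z 0 ω = 1)
    -- càdlàg paths
    (hrc : ∀ ω t, ContinuousWithinAt (fun s => Z s ω) (Set.Ici t) t)
    (hll : ∀ ω (t : ℝ≥0), 0 < t → ∃ l : ℝ,
      Tendsto (fun s => Z s ω) (nhdsWithin t (Set.Iio t)) (𝓝 l))
    -- `Z` is a locally square-integrable martingale on `[0,T]`
    (ρ : ℕ → Ω → ℝ≥0) (hρstop : ∀ k, IsStoppingTime f (fun ω => (ρ k ω : WithTop ℝ≥0)))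
    (hρtop : ∀ ω, Tendsto (fun k => ρ k ω) atTop atTop)
    (hmart : ∀ k, Martingale (fun t ω => Z (min t (ρ k ω)) ω) f μ)
    (hL2 : ∀ k, MemLp (fun ω => Z (min T (ρ k ω)) ω) 2 μ)
    -- `σ` is a predictable stopping time announced by `(σₙ)`
    (σ : Ω → ℝ≥0) (hσstop : IsStoppingTime f (fun ω => (σ ω : WithTop ℝ≥0))) (hσT : ∀ ω, σ ω ≤ T)
    (σn : ℕ → Ω → ℝ≥0) (hσnstop : ∀ n, IsStoppingTime f (fun ω => (σn n ω : WithTop ℝ≥0)))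
    (hσnT : ∀ n ω, σn n ω ≤ T)
    (hmono : ∀ ω, Monotone fun n => σn n ω)
    (hlt : ∀ n ω, 0 < σ ω → σn n ω < σ ω)
    (hconv : ∀ ω, Tendsto (fun n => σn n ω) atTop (𝓝 (σ ω)))
    -- the left limit of `Z` at `σ`
    (Zminus : Ω → ℝ)
    (hZminus : ∀ ω, 0 < σ ω →
      Tendsto (fun s => Z s ω) (nhdsWithin (σ ω) (Set.Iio (σ ω))) (𝓝 (Zminus ω)))
    -- bounded conditional second moments of the restarted normalized densities
    (C : Ω → ℝ≥0∞) (hCfin : ∀ᵐ ω ∂μ, C ω < ∞)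
    (hmom2 : ∀ n, ∀ᵐ ω ∂μ, Z (σn n ω) ω ≠ 0 →
      genCEnn (hσnstop n).measurableSpace μ
        (fun ω' => (Z T ω' / Z (σn n ω') ω') ^ 2) ω ≤ C ω)
    -- the restarted normalized densities have conditional expectation one
    (hmom1 : ∀ n, ∀ᵐ ω ∂μ, Z (σn n ω) ω ≠ 0 →
      genCE (hσnstop n).measurableSpace μ (fun ω' => Z T ω' / Z (σn n ω') ω') ω = 1) :
    μ {ω | 0 < σ ω ∧ Zminus ω = 0 ∧ ∀ n, Z (σn n ω) ω ≠ 0} = 0 := by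
    classical
  have hprog : ProgMeasurable f Z := aux_progMeasurable f Z hadapted hrc
  set V : ℕ → Ω → ℝ := fun n ω => Z (σn n ω) ω with hVdef
  set X : ℕ → Ω → ℝ := fun n ω => Z T ω / Z (σn n ω) ω with hXdef
  have hVmeas : ∀ n, Measurable[(hσnstop n).measurableSpace] (V n) := fun n =>
    measurable_stoppedValue hprog (hσnstop n)
  have hGle : ∀ n, (hσnstop n).measurableSpace ≤ m := fun n =>
    (hσnstop n).measurableSpace_le
  have hGmono : Monotone fun n => (hσnstop n).measurableSpace := by
    intro a b hab
    exact IsStoppingTime.measurableSpace_mono (hσnstop a) (hσnstop b) fun ω => WithTop.coe_le_coe.2 (hmono ω hab)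
  let ℱ : Filtration ℕ m := ⟨fun n => (hσnstop n).measurableSpace, hGmono, hGle⟩
  have hGtle : (⨆ n, (ℱ n : MeasurableSpace Ω)) ≤ m := iSup_le fun n => hGle n
  have hVm : ∀ n, Measurable (V n) := fun n => (hVmeas n).mono (hGle n) le_rfl
  have hZTm : Measurable (Z T) := ((hadapted T).mono (f.le T) le_rfl)
  have hXm : ∀ n, Measurable (X n) := fun n => hZTm.div (hVm n)
  -- the bad set
  set B : Set Ω := {ω | (∀ n, V n ω ≠ 0) ∧ Tendsto (fun n => V n ω) atTop (𝓝 0)} with hBdef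
  have hBGt : MeasurableSet[⨆ n, (ℱ n : MeasurableSpace Ω)] B := by
    have h1 : ∀ n, Measurable[⨆ n, (ℱ n : MeasurableSpace Ω)] (V n) := fun n =>
      (hVmeas n).mono (le_iSup (fun k => (ℱ k : MeasurableSpace Ω)) n) le_rfl
    have h2 : MeasurableSet[⨆ n, (ℱ n : MeasurableSpace Ω)]
        {ω | Tendsto (fun n => V n ω) atTop (𝓝 (0 : ℝ))} :=
      measurableSet_tendsto (𝓝 (0 : ℝ)) h1
    have h3 : MeasurableSet[⨆ n, (ℱ n : MeasurableSpace Ω)] {ω | ∀ n, V n ω ≠ 0} := by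
      rw [Set.setOf_forall]
      exact MeasurableSet.iInter fun n => ((h1 n) (measurableSet_singleton 0)).compl
    exact h3.inter h2
  have hBm : MeasurableSet B := hGtle _ hBGt
  -- inclusion of the target set in `B`
  have hsub : {ω | 0 < σ ω ∧ Zminus ω = 0 ∧ ∀ n, Z (σn n ω) ω ≠ 0} ⊆ B := by
    rintro ω ⟨hσpos, hZm, hne⟩
    refine ⟨hne, ?_⟩
    have h1 : Tendsto (fun n => σn n ω) atTop (nhdsWithin (σ ω) (Set.Iio (σ ω))) :=
      tendsto_nhdsWithin_of_tendsto_nhds_of_eventually_within _ (hconv ω)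
        (Eventually.of_forall fun n => hlt n ω hσpos)
    have h2 := (hZminus ω hσpos).comp h1
    rwa [hZm] at h2
  refine measure_mono_null hsub ?_
  -- key conditional second moment bound
  have hcond2 : ∀ n (j : ℕ), ∀ᵐ ω ∂μ, V n ω ≠ 0 → C ω < ∞ →
      (μ[fun ω' => min ((X n ω') ^ 2) (j : ℝ)|(hσnstop n).measurableSpace]) ω
        ≤ (C ω).toReal := by
    intro n j
    filter_upwards [hmom2 n] with ω h2 hne hC
    have h2' := h2 hne
    simp only [genCEnn] at h2'
    have hle : ENNReal.ofReal
        ((μ[fun ω' => min ((X n ω') ^ 2) (j : ℝ)|(hσnstop n).measurableSpace]) ω) ≤ C ω :=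
      le_trans (le_iSup (fun k : ℕ => ENNReal.ofReal
        ((μ[fun ω' => min ((Z T ω' / Z (σn n ω') ω') ^ 2) (k : ℝ)|
          (hσnstop n).measurableSpace]) ω)) j) h2'
    rcases le_or_gt ((μ[fun ω' => min ((X n ω') ^ 2) (j : ℝ)|
        (hσnstop n).measurableSpace]) ω) 0 with hc | hc
    · exact hc.trans ENNReal.toReal_nonneg
    · have := ENNReal.toReal_mono hC.ne hle
      rwa [ENNReal.toReal_ofReal hc.le] at this
  -- Step 1: `Z T = 0` a.e. on `B`
  set g₁ : Ω → ℝ := fun ω => min ((Z T ω) ^ 2) 1 with hg₁def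
  have hg₁meas : Measurable g₁ := (hZTm.pow_const 2).min measurable_const
  have hg₁nonneg : ∀ ω, 0 ≤ g₁ ω := fun ω => le_min (sq_nonneg _) one_pos.le
  have hg₁bdd : ∀ ω, ‖g₁ ω‖ ≤ 1 := fun ω =>
    abs_le.2 ⟨by linarith [hg₁nonneg ω], min_le_right _ _⟩
  have hg₁int : Integrable g₁ μ := integrable_bdd hg₁meas.aestronglyMeasurable hg₁bdd
  have hkey1 : ∀ n m' M : ℕ, ∀ᵐ ω ∂μ, 1 ≤ (m' : ℝ) * V n ω ^ 2 → V n ω ^ 2 ≤ (M : ℝ) →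
      C ω < ∞ → (μ[g₁|(hσnstop n).measurableSpace]) ω ≤ (C ω).toReal * V n ω ^ 2 := by
    intro n m' M
    set G := (hσnstop n).measurableSpace with hGdef
    have hG : G ≤ m := hGle n
    set D : Set Ω := {ω | 1 ≤ (m' : ℝ) * V n ω ^ 2 ∧ V n ω ^ 2 ≤ (M : ℝ)} with hDdef
    have hVG : Measurable[G] (V n) := hVmeas n
    have hDmeas : MeasurableSet[G] D := by
      have h1 : Measurable[G] fun ω => V n ω ^ 2 := hVG.pow_const 2
      exact (measurableSet_le measurable_const (measurable_const.mul h1)).inter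
        (measurableSet_le h1 measurable_const)
    set ψ : Ω → ℝ := fun ω => min ((X n ω) ^ 2) (m' : ℝ) with hψdef
    have hψmeas : Measurable[m] ψ := ((hXm n).pow_const 2).min measurable_const
    have hψnonneg : ∀ ω, 0 ≤ ψ ω := fun ω => le_min (sq_nonneg _) (Nat.cast_nonneg _)
    have hψbdd : ∀ ω, ‖ψ ω‖ ≤ (m' : ℝ) := fun ω =>
      abs_le.2 ⟨by linarith [hψnonneg ω, Nat.cast_nonneg (α := ℝ) m'], min_le_right _ _⟩
    have hψint : Integrable ψ μ := integrable_bdd hψmeas.aestronglyMeasurable hψbdd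
    set φ : Ω → ℝ := D.indicator (fun ω => V n ω ^ 2) with hφdef
    have hφsm : StronglyMeasurable[G] φ :=
      ((hVG.pow_const 2).indicator hDmeas).stronglyMeasurable
    have hφbdd : ∀ᵐ ω ∂μ, ‖φ ω‖ ≤ (M : ℝ) := by
      refine Eventually.of_forall fun ω => ?_
      by_cases hω : ω ∈ D
      · rw [hφdef, Set.indicator_of_mem hω, Real.norm_eq_abs, abs_of_nonneg (sq_nonneg _)]
        exact hω.2
      · rw [hφdef, Set.indicator_of_notMem hω]
        simpa using Nat.cast_nonneg (α := ℝ) M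
    set ind : Ω → ℝ := D.indicator (fun _ => (1 : ℝ)) with hinddef
    have hindsm : StronglyMeasurable[G] ind :=
      (measurable_const.indicator hDmeas).stronglyMeasurable
    have hindbdd : ∀ ω, ‖ind ω‖ ≤ (1 : ℝ) := by
      intro ω
      by_cases hω : ω ∈ D
      · rw [hinddef, Set.indicator_of_mem hω]; simp
      · rw [hinddef, Set.indicator_of_notMem hω]; simp
    have hpull1 : μ[ind * g₁|G] =ᵐ[μ] ind * μ[g₁|G] :=
      condExp_stronglyMeasurable_mul_of_bound hG hindsm hg₁int 1
        (Eventually.of_forall hindbdd)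
    have hpull2 : μ[φ * ψ|G] =ᵐ[μ] φ * μ[ψ|G] :=
      condExp_stronglyMeasurable_mul_of_bound hG hφsm hψint (M : ℝ) hφbdd
    have hptwise : ∀ ω, (ind * g₁) ω ≤ (φ * ψ) ω := by
      intro ω
      by_cases hω : ω ∈ D
      · have h1 := hω.1
        have hVne : V n ω ≠ 0 := by
          intro h0
          rw [h0] at h1; norm_num at h1
        have hXZ : V n ω ^ 2 * (X n ω) ^ 2 = (Z T ω) ^ 2 := by
          rw [hXdef]
          show V n ω ^ 2 * (Z T ω / V n ω) ^ 2 = Z T ω ^ 2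
          field_simp
        simp only [Pi.mul_apply, hinddef, hφdef, Set.indicator_of_mem hω, one_mul]
        rcases le_total ((X n ω) ^ 2) (m' : ℝ) with h | h
        · rw [hψdef]
          simp only [min_eq_left h]
          rw [hXZ]
          exact min_le_left _ _
        · rw [hψdef]
          simp only [min_eq_right h]
          refine (min_le_right _ _).trans ?_
          calc (1 : ℝ) ≤ (m' : ℝ) * V n ω ^ 2 := h1
          _ = V n ω ^ 2 * (m' : ℝ) := mul_comm _ _
      · simp only [Pi.mul_apply, hinddef, hφdef, Set.indicator_of_notMem hω, zero_mul, le_refl]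
    have hintlhs : Integrable (ind * g₁) μ := by
      refine integrable_bdd ((hindsm.mono hG).measurable.mul hg₁meas).aestronglyMeasurable
        (c := 1) fun ω => ?_
      rw [Pi.mul_apply, norm_mul]
      calc ‖ind ω‖ * ‖g₁ ω‖ ≤ 1 * 1 :=
        mul_le_mul (hindbdd ω) (hg₁bdd ω) (norm_nonneg _) zero_le_one
      _ = 1 := mul_one 1
    have hintrhs : Integrable (φ * ψ) μ := by
      refine integrable_bdd ((hφsm.mono hG).measurable.mul hψmeas).aestronglyMeasurable
        (c := (M : ℝ) * (m' : ℝ)) fun ω => ?_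
      rw [Pi.mul_apply, norm_mul]
      have hb : ‖φ ω‖ ≤ (M : ℝ) := by
        by_cases hω : ω ∈ D
        · rw [hφdef, Set.indicator_of_mem hω, Real.norm_eq_abs, abs_of_nonneg (sq_nonneg _)]
          exact hω.2
        · rw [hφdef, Set.indicator_of_notMem hω]
          simpa using Nat.cast_nonneg (α := ℝ) M
      exact mul_le_mul hb (hψbdd ω) (norm_nonneg _) (Nat.cast_nonneg _)
    have hmono' : μ[ind * g₁|G] ≤ᵐ[μ] μ[φ * ψ|G] :=
      condExp_mono hintlhs hintrhs (Eventually.of_forall hptwise)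
    filter_upwards [hpull1, hpull2, hmono', hcond2 n m'] with ω e1 e2 e3 e4 h1 h2 hC
    have hωD : ω ∈ D := ⟨h1, h2⟩
    calc (μ[g₁|G]) ω = (ind * μ[g₁|G]) ω := by
          simp only [Pi.mul_apply, hinddef, Set.indicator_of_mem hωD, one_mul]
    _ = (μ[ind * g₁|G]) ω := e1.symm
    _ ≤ (μ[φ * ψ|G]) ω := e3
    _ = (φ * μ[ψ|G]) ω := e2
    _ = V n ω ^ 2 * (μ[ψ|G]) ω := by
          simp only [Pi.mul_apply, hφdef, Set.indicator_of_mem hωD]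
    _ ≤ V n ω ^ 2 * (C ω).toReal := by
          have hVne : V n ω ≠ 0 := by
            intro h0
            rw [h0] at h1; norm_num at h1
          exact mul_le_mul_of_nonneg_left (e4 hVne hC) (sq_nonneg _)
    _ = (C ω).toReal * V n ω ^ 2 := mul_comm _ _
  have hkey1' : ∀ᵐ ω ∂μ, ∀ n m' M : ℕ, 1 ≤ (m' : ℝ) * V n ω ^ 2 → V n ω ^ 2 ≤ (M : ℝ) →
      C ω < ∞ → (μ[g₁|(hσnstop n).measurableSpace]) ω ≤ (C ω).toReal * V n ω ^ 2 := by
    rw [ae_all_iff]; intro n; rw [ae_all_iff]; intro m'; rw [ae_all_iff]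
    exact fun M => hkey1 n m' M
  have hlevy1 : ∀ᵐ ω ∂μ, Tendsto (fun n => (μ[g₁|ℱ n]) ω) atTop
      (𝓝 ((μ[g₁|⨆ n, (ℱ n : MeasurableSpace Ω)]) ω)) :=
    tendsto_ae_condExp g₁
  have hstep1 : ∀ᵐ ω ∂μ, ω ∈ B → (μ[g₁|⨆ n, (ℱ n : MeasurableSpace Ω)]) ω ≤ 0 := by
    filter_upwards [hlevy1, hCfin, hkey1'] with ω hlevy hC hkey hBω
    have hbound : ∀ n, (μ[g₁|ℱ n]) ω ≤ (C ω).toReal * V n ω ^ 2 := by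
      intro n
      have hVne : V n ω ≠ 0 := hBω.1 n
      have hVpos : 0 < V n ω ^ 2 := by positivity
      refine hkey n ⌈1 / V n ω ^ 2⌉₊ ⌈V n ω ^ 2⌉₊ ?_ (Nat.le_ceil _) hC
      have h1 : 1 / V n ω ^ 2 ≤ (⌈1 / V n ω ^ 2⌉₊ : ℝ) := Nat.le_ceil _
      calc (1 : ℝ) = 1 / V n ω ^ 2 * V n ω ^ 2 := by field_simp
      _ ≤ (⌈1 / V n ω ^ 2⌉₊ : ℝ) * V n ω ^ 2 :=
          mul_le_mul_of_nonneg_right h1 hVpos.le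
    have hlim0 : Tendsto (fun n => (C ω).toReal * V n ω ^ 2) atTop (𝓝 0) := by
      have h1 : Tendsto (fun n => (C ω).toReal * (V n ω * V n ω)) atTop
          (𝓝 ((C ω).toReal * (0 * 0))) := (hBω.2.mul hBω.2).const_mul _
      simpa [pow_two] using h1
    exact le_of_tendsto_of_tendsto' hlevy hlim0 hbound
  have hcondnonneg : 0 ≤ᵐ[μ] μ[g₁|⨆ n, (ℱ n : MeasurableSpace Ω)] :=
    condExp_nonneg (Eventually.of_forall hg₁nonneg)
  have hZT0 : ∀ᵐ ω ∂μ, ω ∈ B → Z T ω = 0 := by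
    have hzero : μ[g₁|⨆ n, (ℱ n : MeasurableSpace Ω)] =ᵐ[μ.restrict B] 0 := by
      rw [EventuallyEq, ae_restrict_iff' hBm]
      filter_upwards [hstep1, hcondnonneg] with ω h1 h2 hBω
      exact le_antisymm (h1 hBω) h2
    have hint0 : ∫ ω in B, g₁ ω ∂μ = 0 := by
      rw [← setIntegral_condExp hGtle hg₁int hBGt, integral_congr_ae hzero]
      simp
    have hg0 : g₁ =ᵐ[μ.restrict B] 0 := by
      rw [← integral_eq_zero_iff_of_nonneg_ae (Eventually.of_forall hg₁nonneg)
        hg₁int.restrict]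
      exact hint0
    have hg0' := (ae_restrict_iff' hBm).1 hg0
    filter_upwards [hg0'] with ω h hBω
    have h0 : g₁ ω = 0 := h hBω
    by_contra hne
    have h1 : 0 < (Z T ω) ^ 2 := by positivity
    have h2 : 0 < min ((Z T ω) ^ 2) 1 := lt_min h1 one_pos
    rw [hg₁def] at h0
    simp only at h0
    linarith
  -- Step 2
  set ind' : Ω → ℝ := Bᶜ.indicator (fun _ => (1 : ℝ)) with hind'def
  have hind'meas : Measurable[m] ind' := measurable_const.indicator hBm.compl
  have hind'bdd : ∀ ω, ‖ind' ω‖ ≤ 1 := by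
    intro ω
    by_cases hω : ω ∈ Bᶜ
    · rw [hind'def, Set.indicator_of_mem hω]; simp
    · rw [hind'def, Set.indicator_of_notMem hω]; simp
  have hind'int : Integrable ind' μ := integrable_bdd hind'meas.aestronglyMeasurable hind'bdd
  have hind'sm : StronglyMeasurable[⨆ n, (ℱ n : MeasurableSpace Ω)] ind' :=
    (measurable_const.indicator hBGt.compl).stronglyMeasurable
  have hq0 : ∀ n, 0 ≤ᵐ[μ] μ[ind'|(hσnstop n).measurableSpace] := fun n =>
    condExp_nonneg (Eventually.of_forall fun ω =>
      Set.indicator_nonneg (fun _ _ => zero_le_one) ω)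
  have hkey2 : ∀ n j : ℕ, ∀ᵐ ω ∂μ, ω ∈ B → C ω < ∞ →
      1 ≤ ((j : ℝ) + 1)⁻¹ / 2 * (C ω).toReal
        + (2 * ((j : ℝ) + 1)⁻¹)⁻¹ * (μ[ind'|(hσnstop n).measurableSpace]) ω := by
    intro n j
    set G := (hσnstop n).measurableSpace with hGdef
    have hG : G ≤ m := hGle n
    set t : ℝ := ((j : ℝ) + 1)⁻¹ with htdef
    have ht : 0 < t := by positivity
    have hks : ∀ k : ℕ, ∀ᵐ ω ∂μ, V n ω ≠ 0 → C ω < ∞ →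
        (μ[fun ω' => min (max (X n ω') 0) (k : ℝ)|G]) ω
          ≤ t / 2 * (C ω).toReal + (2 * t)⁻¹ * (μ[ind'|G]) ω := by
      intro k
      set hk : Ω → ℝ := fun ω => min (max (X n ω) 0) (k : ℝ) with hhkdef
      have hhkmeas : Measurable[m] hk := ((hXm n).max measurable_const).min measurable_const
      have hhk0 : ∀ ω, 0 ≤ hk ω := fun ω => le_min (le_max_right _ _) (Nat.cast_nonneg _)
      have hhkk : ∀ ω, hk ω ≤ (k : ℝ) := fun ω => min_le_right _ _
      have hhkint : Integrable hk μ := integrable_bdd hhkmeas.aestronglyMeasurable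
        (fun ω => abs_le.2 ⟨by linarith [hhk0 ω, Nat.cast_nonneg (α := ℝ) k], hhkk ω⟩)
      set ψ₂ : Ω → ℝ := fun ω => min ((X n ω) ^ 2) ((k ^ 2 : ℕ) : ℝ) with hψ₂def
      have hψ₂meas : Measurable[m] ψ₂ := ((hXm n).pow_const 2).min measurable_const
      have hψ₂nonneg : ∀ ω, 0 ≤ ψ₂ ω := fun ω => le_min (sq_nonneg _) (Nat.cast_nonneg _)
      have hψ₂int : Integrable ψ₂ μ := integrable_bdd hψ₂meas.aestronglyMeasurable
        (c := ((k ^ 2 : ℕ) : ℝ))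
        (fun ω => abs_le.2 ⟨by linarith [hψ₂nonneg ω, Nat.cast_nonneg (α := ℝ) (k ^ 2)],
          min_le_right _ _⟩)
      have hcongr : hk =ᵐ[μ] fun ω => ind' ω * hk ω := by
        filter_upwards [hZT0] with ω hz
        by_cases hω : ω ∈ B
        · have hZ : Z T ω = 0 := hz hω
          have h1 : hk ω = 0 := by
            rw [hhkdef]
            simp only [hXdef]
            rw [hZ, zero_div]
            simp
          rw [h1, hind'def, Set.indicator_of_notMem (by simpa using hω), zero_mul]
        · rw [hind'def, Set.indicator_of_mem (Set.mem_compl hω), one_mul]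
      have hptw : ∀ ω, ind' ω * hk ω ≤ ((t / 2) • ψ₂ + (2 * t)⁻¹ • ind') ω := by
        intro ω
        simp only [Pi.add_apply, Pi.smul_apply, smul_eq_mul]
        by_cases hω : ω ∈ B
        · rw [hind'def, Set.indicator_of_notMem (by simpa using hω)]
          have h1 := hψ₂nonneg ω
          nlinarith
        · rw [hind'def, Set.indicator_of_mem (Set.mem_compl hω), one_mul, mul_one]
          have hsq : hk ω ^ 2 ≤ ψ₂ ω := by
            rw [hψ₂def]
            refine le_min ?_ ?_
            · rcases le_total (X n ω) 0 with h | h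
              · have h1 : hk ω = 0 := by
                  rw [hhkdef]
                  simp [max_eq_right h, min_eq_left (Nat.cast_nonneg (α := ℝ) k)]
                rw [h1]
                nlinarith [sq_nonneg (X n ω)]
              · have h1 : hk ω ≤ max (X n ω) 0 := min_le_left _ _
                have h2 : max (X n ω) 0 = X n ω := max_eq_left h
                nlinarith [hhk0 ω]
            · push_cast
              nlinarith [hhk0 ω, hhkk ω, Nat.cast_nonneg (α := ℝ) k]
          have hexp : t / 2 * hk ω ^ 2 + (2 * t)⁻¹ - hk ω = (t * hk ω - 1) ^ 2 / (2 * t) := by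
            field_simp
            ring
          have key : hk ω ≤ t / 2 * hk ω ^ 2 + (2 * t)⁻¹ := by
            have h6 : (0 : ℝ) ≤ (t * hk ω - 1) ^ 2 / (2 * t) := by positivity
            linarith [hexp ▸ h6]
          have h5 := mul_le_mul_of_nonneg_left hsq (by positivity : (0 : ℝ) ≤ t / 2)
          linarith
      have hRHSint : Integrable ((t / 2) • ψ₂ + (2 * t)⁻¹ • ind') μ :=
        (hψ₂int.smul _).add (hind'int.smul _)
      have hlhsint : Integrable (fun ω => ind' ω * hk ω) μ := by
        refine integrable_bdd (hind'meas.mul hhkmeas).aestronglyMeasurable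
          (c := (k : ℝ)) fun ω => ?_
        rw [norm_mul]
        have hc1 : ‖hk ω‖ ≤ (k : ℝ) :=
          abs_le.2 ⟨by linarith [hhk0 ω, Nat.cast_nonneg (α := ℝ) k], hhkk ω⟩
        have hc2 : ‖ind' ω‖ * ‖hk ω‖ ≤ 1 * (k : ℝ) :=
          mul_le_mul (hind'bdd ω) hc1 (norm_nonneg _) zero_le_one
        linarith
      have e0 : μ[hk|G] =ᵐ[μ] μ[fun ω => ind' ω * hk ω|G] := condExp_congr_ae hcongr
      have e1 : μ[fun ω => ind' ω * hk ω|G] ≤ᵐ[μ]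
          μ[(t / 2) • ψ₂ + (2 * t)⁻¹ • ind'|G] :=
        condExp_mono hlhsint hRHSint (Eventually.of_forall hptw)
      have ea : μ[(t / 2) • ψ₂ + (2 * t)⁻¹ • ind'|G] =ᵐ[μ]
          μ[(t / 2) • ψ₂|G] + μ[(2 * t)⁻¹ • ind'|G] :=
        condExp_add (hψ₂int.smul _) (hind'int.smul _) G
      have hb := condExp_smul (μ := μ) (m := G) (t / 2) ψ₂
      have hc := condExp_smul (μ := μ) (m := G) ((2 * t)⁻¹) ind'
      have e2 := ea.trans (hb.add hc)
      filter_upwards [e0, e1, e2, hcond2 n (k ^ 2), hq0 n] with ω f0 f1 f2 f3 f4 hVne hC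
      have hch : (μ[hk|G]) ω ≤ t / 2 * (μ[ψ₂|G]) ω + (2 * t)⁻¹ * (μ[ind'|G]) ω := by
        rw [f0]
        refine f1.trans ?_
        rw [f2]
        simp [Pi.add_apply, Pi.smul_apply, smul_eq_mul]
      refine hch.trans ?_
      have h3 := f3 hVne hC
      have ht2 : (0 : ℝ) ≤ t / 2 := by positivity
      have := mul_le_mul_of_nonneg_left h3 ht2
      linarith
    filter_upwards [ae_all_iff.2 hks, hmom1 n, hq0 n] with ω hkk h1 hq hBω hC
    have hVne : V n ω ≠ 0 := hBω.1 n
    have h1' := h1 hVne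
    simp only [genCE] at h1'
    set R : ℝ := t / 2 * (C ω).toReal + (2 * t)⁻¹ * (μ[ind'|G]) ω with hRdef
    have hR0 : 0 ≤ R := by
      rw [hRdef]
      have h2 : (0 : ℝ) ≤ (2 * t)⁻¹ * (μ[ind'|G]) ω :=
        mul_nonneg (by positivity) hq
      have h3 : (0 : ℝ) ≤ t / 2 * (C ω).toReal :=
        mul_nonneg (by positivity) ENNReal.toReal_nonneg
      linarith
    have hSle : genCEnn G μ
        (fun ω' => max (Z T ω' / Z (σn n ω') ω') 0) ω ≤ ENNReal.ofReal R := by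
      simp only [genCEnn]
      exact iSup_le fun k => ENNReal.ofReal_le_ofReal (hkk k hVne hC)
    have hb0 : (0 : ℝ) ≤
        (genCEnn G μ (fun ω' => max (-(Z T ω' / Z (σn n ω') ω')) 0) ω).toReal :=
      ENNReal.toReal_nonneg
    have h1'' : 1 ≤
        (genCEnn G μ (fun ω' => max (Z T ω' / Z (σn n ω') ω') 0) ω).toReal := by
      linarith
    have h2 := ENNReal.toReal_mono ENNReal.ofReal_ne_top hSle
    rw [ENNReal.toReal_ofReal hR0] at h2
    exact h1''.trans h2
  have hkey2' : ∀ᵐ ω ∂μ, ∀ n j : ℕ, ω ∈ B → C ω < ∞ →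
      1 ≤ ((j : ℝ) + 1)⁻¹ / 2 * (C ω).toReal
        + (2 * ((j : ℝ) + 1)⁻¹)⁻¹ * (μ[ind'|(hσnstop n).measurableSpace]) ω := by
    rw [ae_all_iff]; intro n; rw [ae_all_iff]; exact fun j => hkey2 n j
  have hcondind : μ[ind'|⨆ n, (ℱ n : MeasurableSpace Ω)] = ind' :=
    condExp_of_stronglyMeasurable hGtle hind'sm hind'int
  have hlevy2 : ∀ᵐ ω ∂μ, Tendsto (fun n => (μ[ind'|ℱ n]) ω) atTop (𝓝 (ind' ω)) := by
    have h := tendsto_ae_condExp (μ := μ) (ℱ := ℱ) ind'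
    rw [hcondind] at h
    exact h
  have hBnull : ∀ᵐ ω ∂μ, ω ∉ B := by
    filter_upwards [hlevy2, hCfin, hkey2'] with ω hl hC hk
    intro hBω
    have hind0 : ind' ω = 0 := by
      rw [hind'def]
      exact Set.indicator_of_notMem (by simpa using hBω) _
    rw [hind0] at hl
    have hj : ∀ j : ℕ, 1 ≤ ((j : ℝ) + 1)⁻¹ / 2 * (C ω).toReal := by
      intro j
      have hTend : Tendsto (fun n => ((j : ℝ) + 1)⁻¹ / 2 * (C ω).toReal
          + (2 * ((j : ℝ) + 1)⁻¹)⁻¹ * (μ[ind'|ℱ n]) ω) atTop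
          (𝓝 (((j : ℝ) + 1)⁻¹ / 2 * (C ω).toReal + (2 * ((j : ℝ) + 1)⁻¹)⁻¹ * 0)) :=
        tendsto_const_nhds.add (hl.const_mul _)
      have h2 := ge_of_tendsto' hTend fun n => hk n j hBω hC
      simpa using h2
    have h1 : Tendsto (fun j : ℕ => ((j : ℝ) + 1)⁻¹) atTop (𝓝 0) := by
      simpa only [one_div] using tendsto_one_div_add_atTop_nhds_zero_nat (𝕜 := ℝ)
    have ht0 := (h1.div_const 2).mul_const ((C ω).toReal)
    rw [zero_div, zero_mul] at ht0
    have hfin := ge_of_tendsto' ht0 hj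
    linarith
  have hμB : μ B = 0 := by
    have h := hBnull
    rw [ae_iff] at h
    simpa using h
  exact hμB
end

section
/- Let (Ω,ℱ,P) be a probability space and 𝒢 ⊆ ℱ a sub-σ-algebra. Let Z be ℱ-measurable with E[Z|𝒢] = 1 a.s. and E[Z²|𝒢] < ∞ a.s. Then for every non-null A ∈ 𝒢, the indicator 𝟙_A does not lie in the set Ĝ := {W : E[W²|𝒢] < ∞ a.s. and E[W·Z|𝒢] = 0 a.s.}; moreover the minimal conditional distance satisfies essinf_{W ∈ Ĝ} E[(1−W)²|𝒢] = 1/E[Z²|𝒢] a.s., attained at W = 1 − Z/E[Z²|𝒢]. -/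
open MeasureTheory Filter Topology
open scoped ENNReal NNReal

section Core

variable {Ω : Type*} {G : MeasurableSpace Ω} {m : MeasurableSpace Ω}
  {μ : Measure Ω}

lemma integrable_min_nat [IsProbabilityMeasure μ] {f : Ω → ℝ} (hf : Measurable f) (h0 : 0 ≤ f)
    (n : ℕ) : Integrable (fun ω => min (f ω) (n : ℝ)) μ := by
  refine Integrable.mono (integrable_const (n : ℝ)) ((hf.min measurable_const).aestronglyMeasurable) ?_
  refine Eventually.of_forall fun ω => ?_
  rw [Real.norm_eq_abs, Real.norm_eq_abs,
    abs_of_nonneg (le_min (h0 ω) (Nat.cast_nonneg n)), abs_of_nonneg (Nat.cast_nonneg n)]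
  exact min_le_right _ _

lemma genCEnn_measurable (f : Ω → ℝ) : Measurable[G] (genCEnn G μ f) := by
  apply Measurable.iSup
  intro n
  exact ENNReal.measurable_ofReal.comp (stronglyMeasurable_condExp (m := G)).measurable

/-- a.e. monotonicity in n of the truncated condExps. -/
lemma genCEnn_ae_mono [IsProbabilityMeasure μ] (hG : G ≤ m) {f : Ω → ℝ} (hf : Measurable f)
    (h0 : 0 ≤ f) :
    ∀ᵐ ω ∂μ, Monotone fun n : ℕ =>
      ENNReal.ofReal ((condExp G μ (fun ω' => min (f ω') (n : ℝ))) ω) := by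
  have h : ∀ n : ℕ, ∀ᵐ ω ∂μ,
      (condExp G μ (fun ω' => min (f ω') (n : ℝ))) ω ≤
      (condExp G μ (fun ω' => min (f ω') ((n+1 : ℕ) : ℝ))) ω := by
    intro n
    refine condExp_mono (integrable_min_nat hf h0 n) (integrable_min_nat hf h0 (n+1)) ?_
    refine Eventually.of_forall fun ω => ?_
    exact min_le_min le_rfl (by exact_mod_cast Nat.le_succ n)
  rw [← ae_all_iff] at h
  filter_upwards [h] with ω hω
  exact monotone_nat_of_le_succ fun n => ENNReal.ofReal_le_ofReal (hω n)

/-- Characterization: set-lintegral of genCEnn equals set-lintegral of f. -/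
lemma setLIntegral_genCEnn [IsProbabilityMeasure μ] (hG : G ≤ m) {f : Ω → ℝ} (hf : Measurable f)
    (h0 : 0 ≤ f) {s : Set Ω} (hs : MeasurableSet[G] s) :
    ∫⁻ ω in s, genCEnn G μ f ω ∂μ = ∫⁻ ω in s, ENNReal.ofReal (f ω) ∂μ := by
  have hmono := genCEnn_ae_mono (μ := μ) hG hf h0
  have hmeas : ∀ n : ℕ, AEMeasurable (fun ω => ENNReal.ofReal
      ((condExp G μ (fun ω' => min (f ω') (n : ℝ))) ω)) (μ.restrict s) :=
    fun n => (((stronglyMeasurable_condExp (m := G)).measurable.mono hG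
      le_rfl).ennreal_ofReal).aemeasurable
  have h1 : ∫⁻ ω in s, genCEnn G μ f ω ∂μ = ⨆ n : ℕ, ∫⁻ ω in s, ENNReal.ofReal
      ((condExp G μ (fun ω' => min (f ω') (n : ℝ))) ω) ∂μ :=
    lintegral_iSup' hmeas (ae_restrict_of_ae hmono)
  rw [h1]
  have hstep : ∀ n : ℕ, ∫⁻ ω in s, ENNReal.ofReal
      ((condExp G μ (fun ω' => min (f ω') (n : ℝ))) ω) ∂μ
      = ∫⁻ ω in s, ENNReal.ofReal (min (f ω) (n : ℝ)) ∂μ := by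
    intro n
    have hint := integrable_min_nat (μ := μ) hf h0 n
    have hnn0 : (0 : Ω → ℝ) ≤ᵐ[μ] fun ω => min (f ω) (n : ℝ) :=
      Eventually.of_forall fun ω => le_min (h0 ω) (Nat.cast_nonneg n)
    have hnn : 0 ≤ᵐ[μ] condExp G μ (fun ω' => min (f ω') (n : ℝ)) := condExp_nonneg hnn0
    have e1 : ∫ ω in s, (condExp G μ (fun ω' => min (f ω') (n : ℝ))) ω ∂μ
        = ∫ ω in s, min (f ω) (n : ℝ) ∂μ := setIntegral_condExp hG hint hs
    rw [← ofReal_integral_eq_lintegral_ofReal integrable_condExp.integrableOn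
        (ae_restrict_of_ae hnn), e1,
      ofReal_integral_eq_lintegral_ofReal hint.integrableOn (ae_restrict_of_ae hnn0)]
  simp_rw [hstep]
  have h2 : (⨆ n : ℕ, ∫⁻ ω in s, ENNReal.ofReal (min (f ω) (n : ℝ)) ∂μ)
      = ∫⁻ ω in s, ⨆ n : ℕ, ENNReal.ofReal (min (f ω) (n : ℝ)) ∂μ :=
    (lintegral_iSup' (fun n => ((hf.min measurable_const).ennreal_ofReal).aemeasurable)
      (ae_restrict_of_ae (Eventually.of_forall (fun ω a b hab => ENNReal.ofReal_le_ofReal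
        (min_le_min le_rfl (by exact_mod_cast hab)))))).symm
  rw [h2]
  congr 1
  ext ω
  refine le_antisymm (iSup_le fun n => ENNReal.ofReal_le_ofReal (min_le_left _ _)) ?_
  obtain ⟨n, hn⟩ := exists_nat_ge (f ω)
  exact le_iSup_of_le n (by rw [min_eq_left hn])


lemma setLIntegral_trim_eq [IsProbabilityMeasure μ] (hG : G ≤ m) {h : Ω → ℝ≥0∞}
    (hh : Measurable[G] h) {s : Set Ω} (hs : MeasurableSet[G] s) :
    ∫⁻ ω in s, h ω ∂(μ.trim hG) = ∫⁻ ω in s, h ω ∂μ := by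
  rw [restrict_trim hG μ hs, lintegral_trim hG hh]

/-- Uniqueness: any G-measurable function with the right set-lintegrals is a.e. genCEnn. -/
lemma genCEnn_unique [IsProbabilityMeasure μ] (hG : G ≤ m) {f : Ω → ℝ} (hf : Measurable f)
    (h0 : 0 ≤ f) {h : Ω → ℝ≥0∞} (hh : Measurable[G] h)
    (heq : ∀ s, MeasurableSet[G] s → ∫⁻ ω in s, h ω ∂μ = ∫⁻ ω in s, ENNReal.ofReal (f ω) ∂μ) :
    h =ᵐ[μ] genCEnn G μ f := by
  refine ae_eq_of_ae_eq_trim (hm := hG) ?_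
  refine ae_eq_of_forall_setLIntegral_eq_of_sigmaFinite (μ := μ.trim hG) hh
    (genCEnn_measurable f) (fun s hs _ => ?_)
  rw [setLIntegral_trim_eq hG hh hs, setLIntegral_trim_eq hG (genCEnn_measurable f) hs,
    heq s hs, setLIntegral_genCEnn hG hf h0 hs]

lemma genCEnn_congr_ae [IsProbabilityMeasure μ] {f g : Ω → ℝ} (h : f =ᵐ[μ] g) :
    genCEnn G μ f =ᵐ[μ] genCEnn G μ g := by
  have : ∀ n : ℕ, condExp G μ (fun ω' => min (f ω') (n : ℝ))
      =ᵐ[μ] condExp G μ (fun ω' => min (g ω') (n : ℝ)) := by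
    intro n
    exact condExp_congr_ae (by filter_upwards [h] with ω hω; rw [hω])
  have h2 : ∀ᵐ ω ∂μ, ∀ n : ℕ, condExp G μ (fun ω' => min (f ω') (n : ℝ)) ω
      = condExp G μ (fun ω' => min (g ω') (n : ℝ)) ω := ae_all_iff.2 fun n => this n
  filter_upwards [h2] with ω hω
  simp only [genCEnn]
  exact iSup_congr fun n => by rw [hω n]

lemma genCEnn_mono [IsProbabilityMeasure μ] {f g : Ω → ℝ} (hf : Measurable f) (h0f : 0 ≤ f)
    (hg : Measurable g) (h0g : 0 ≤ g) (hfg : f ≤ g) :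
    ∀ᵐ ω ∂μ, genCEnn G μ f ω ≤ genCEnn G μ g ω := by
  have : ∀ n : ℕ, ∀ᵐ ω ∂μ, condExp G μ (fun ω' => min (f ω') (n : ℝ)) ω
      ≤ condExp G μ (fun ω' => min (g ω') (n : ℝ)) ω :=
    fun n => condExp_mono (integrable_min_nat hf h0f n) (integrable_min_nat hg h0g n)
      (Eventually.of_forall fun ω => min_le_min (hfg ω) le_rfl)
  rw [← ae_all_iff] at this
  filter_upwards [this] with ω hω
  exact iSup_mono fun n => ENNReal.ofReal_le_ofReal (hω n)

lemma genCEnn_add [IsProbabilityMeasure μ] (hG : G ≤ m) {f g : Ω → ℝ} (hf : Measurable f)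
    (h0f : 0 ≤ f) (hg : Measurable g) (h0g : 0 ≤ g) :
    genCEnn G μ (fun ω => f ω + g ω) =ᵐ[μ] fun ω => genCEnn G μ f ω + genCEnn G μ g ω := by
  refine (genCEnn_unique hG (hf.add hg) (fun ω => add_nonneg (h0f ω) (h0g ω))
    ((genCEnn_measurable f).add (genCEnn_measurable g)) (fun s hs => ?_)).symm
  simp only [Pi.add_apply]
  rw [lintegral_add_left' ((genCEnn_measurable (G := G) (μ := μ) f).mono hG le_rfl).aemeasurable]
  rw [setLIntegral_genCEnn hG hf h0f hs, setLIntegral_genCEnn hG hg h0g hs,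
    ← lintegral_add_left' (hf.ennreal_ofReal).aemeasurable]
  congr 1
  ext ω
  exact (ENNReal.ofReal_add (h0f ω) (h0g ω)).symm

lemma genCEnn_const [IsProbabilityMeasure μ] (hG : G ≤ m) {a : ℝ} (ha : 0 ≤ a) :
    genCEnn G μ (fun _ => a) = fun _ => ENNReal.ofReal a := by
  funext ω
  simp only [genCEnn]
  have : ∀ n : ℕ, condExp G μ (fun _ => min a (n : ℝ)) = fun _ => min a (n : ℝ) :=
    fun n => condExp_const hG _
  simp_rw [this]
  refine le_antisymm (iSup_le fun n => ENNReal.ofReal_le_ofReal (min_le_left _ _)) ?_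
  obtain ⟨n, hn⟩ := exists_nat_ge a
  exact le_iSup_of_le n (by rw [min_eq_left hn])

/-- Pull out a nonnegative G-measurable factor. -/
lemma genCEnn_pullout [IsProbabilityMeasure μ] (hG : G ≤ m) {g : Ω → ℝ} (hg : Measurable[G] g)
    (h0g : 0 ≤ g) {f : Ω → ℝ} (hf : Measurable f) (h0f : 0 ≤ f) :
    genCEnn G μ (fun ω => g ω * f ω) =ᵐ[μ]
      fun ω => ENNReal.ofReal (g ω) * genCEnn G μ f ω := by
  refine (genCEnn_unique hG ((hg.mono hG le_rfl).mul hf)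
    (fun ω => mul_nonneg (h0g ω) (h0f ω))
    (hg.ennreal_ofReal.mul (genCEnn_measurable f)) (fun s hs => ?_)).symm
  have key : (μ.withDensity (genCEnn G μ f)).trim hG
      = (μ.withDensity (fun ω => ENNReal.ofReal (f ω))).trim hG := by
    refine @Measure.ext _ G _ _ (fun t ht => ?_)
    rw [trim_measurableSet_eq hG ht, trim_measurableSet_eq hG ht,
      withDensity_apply _ (hG t ht), withDensity_apply _ (hG t ht),
      setLIntegral_genCEnn hG hf h0f ht]
  have hφ : Measurable[G] (fun ω => s.indicator (fun ω' => ENNReal.ofReal (g ω')) ω) :=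
    (hg.ennreal_ofReal).indicator hs
  have e1 : ∫⁻ ω, s.indicator (fun ω' => ENNReal.ofReal (g ω')) ω
        ∂(μ.withDensity (genCEnn G μ f))
      = ∫⁻ ω, s.indicator (fun ω' => ENNReal.ofReal (g ω')) ω
        ∂(μ.withDensity (fun ω => ENNReal.ofReal (f ω))) := by
    rw [← lintegral_trim hG hφ, ← lintegral_trim hG hφ, key]
  rw [lintegral_withDensity_eq_lintegral_mul _ ((genCEnn_measurable f).mono hG le_rfl)
      ((hφ.mono hG le_rfl)),
    lintegral_withDensity_eq_lintegral_mul _ hf.ennreal_ofReal (hφ.mono hG le_rfl)] at e1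
  calc ∫⁻ ω in s, ENNReal.ofReal (g ω) * genCEnn G μ f ω ∂μ
      = ∫⁻ ω, (genCEnn G μ f ω) * s.indicator (fun ω' => ENNReal.ofReal (g ω')) ω ∂μ := by
        rw [← lintegral_indicator (hG s hs)]
        congr 1; ext ω
        by_cases hω : ω ∈ s <;>
          simp [hω, Set.indicator_of_mem, Set.indicator_of_notMem, mul_comm]
    _ = ∫⁻ ω, (ENNReal.ofReal (f ω)) * s.indicator (fun ω' => ENNReal.ofReal (g ω')) ω ∂μ := e1
    _ = ∫⁻ ω in s, ENNReal.ofReal (g ω * f ω) ∂μ := by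
        rw [← lintegral_indicator (hG s hs)]
        congr 1; ext ω
        by_cases hω : ω ∈ s <;>
          simp [hω, Set.indicator_of_mem, Set.indicator_of_notMem, mul_comm,
            ENNReal.ofReal_mul (h0g ω)]


lemma genCE_nonneg_rep [IsProbabilityMeasure μ] (hG : G ≤ m) {f : Ω → ℝ} (h0 : 0 ≤ f) :
    genCE G μ f = fun ω => (genCEnn G μ f ω).toReal := by
  funext ω
  have e1 : (fun ω' => max (f ω') 0) = f := funext fun ω' => max_eq_left (h0 ω')
  have e2 : (fun ω' => max (-f ω') 0) = fun _ => (0 : ℝ) :=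
    funext fun ω' => max_eq_right (neg_nonpos.2 (h0 ω'))
  simp only [genCE, e1, e2, genCEnn_const hG le_rfl, ENNReal.ofReal_zero, ENNReal.toReal_zero,
    sub_zero]

lemma genCE_add [IsProbabilityMeasure μ] (hG : G ≤ m) {f g : Ω → ℝ} (hf : Measurable f)
    (hg : Measurable g)
    (hfi : ∀ᵐ ω ∂μ, genCEnn G μ (fun ω' => |f ω'|) ω < ∞)
    (hgi : ∀ᵐ ω ∂μ, genCEnn G μ (fun ω' => |g ω'|) ω < ∞) :
    genCE G μ (fun ω => f ω + g ω) =ᵐ[μ] fun ω => genCE G μ f ω + genCE G μ g ω := by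
  have habs : Measurable (fun ω => |f ω|) := hf.abs
  have hfp : Measurable (fun ω => max (f ω) 0) := hf.max measurable_const
  have hfn : Measurable (fun ω => max (-f ω) 0) := hf.neg.max measurable_const
  have hgp : Measurable (fun ω => max (g ω) 0) := hg.max measurable_const
  have hgn : Measurable (fun ω => max (-g ω) 0) := hg.neg.max measurable_const
  have hsp : Measurable (fun ω => max (f ω + g ω) 0) := (hf.add hg).max measurable_const
  have hsn : Measurable (fun ω => max (-(f ω + g ω)) 0) := (hf.add hg).neg.max measurable_const
  have pos0 : ∀ (h : Ω → ℝ), (0 : Ω → ℝ) ≤ fun ω => max (h ω) 0 :=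
    fun h ω => le_max_right _ _
  -- finiteness bounds
  have boundp : ∀ {h : Ω → ℝ}, Measurable h →
      (∀ᵐ ω ∂μ, genCEnn G μ (fun ω' => |h ω'|) ω < ∞) →
      (∀ᵐ ω ∂μ, genCEnn G μ (fun ω' => max (h ω') 0) ω < ∞)
        ∧ (∀ᵐ ω ∂μ, genCEnn G μ (fun ω' => max (-h ω') 0) ω < ∞) := by
    intro h hh hfin
    constructor
    · filter_upwards [hfin, genCEnn_mono (G := G) (μ := μ) (hh.max measurable_const) (pos0 h) hh.abs
        (fun ω => abs_nonneg _) (fun ω => max_le (le_abs_self _) (abs_nonneg _))] with ω h1 h2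
      exact lt_of_le_of_lt h2 h1
    · filter_upwards [hfin, genCEnn_mono (G := G) (μ := μ) (hh.neg.max measurable_const)
        (pos0 (fun ω => -h ω)) hh.abs (fun ω => abs_nonneg _)
        (fun ω => max_le (neg_le_abs _) (abs_nonneg _))] with ω h1 h2
      exact lt_of_le_of_lt h2 h1
  obtain ⟨hfpfin, hfnfin⟩ := boundp hf hfi
  obtain ⟨hgpfin, hgnfin⟩ := boundp hg hgi
  have hsi : ∀ᵐ ω ∂μ, genCEnn G μ (fun ω' => |f ω' + g ω'|) ω < ∞ := by
    have hmn := genCEnn_mono (G := G) (μ := μ) (hf.add hg).abs (fun ω => abs_nonneg _)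
      (g := fun ω => |f ω| + |g ω|) (habs.add hg.abs) (fun ω => add_nonneg (abs_nonneg _) (abs_nonneg _))
      (fun ω => abs_add_le _ _)
    have had := genCEnn_add (μ := μ) hG habs (fun ω => abs_nonneg _) hg.abs (fun ω => abs_nonneg _)
    filter_upwards [hmn, had, hfi, hgi] with ω h1 h2 h3 h4
    rw [h2] at h1
    exact lt_of_le_of_lt h1 (ENNReal.add_lt_top.2 ⟨h3, h4⟩)
  obtain ⟨hspfin, hsnfin⟩ := boundp (h := fun ω => f ω + g ω) (hf.add hg) hsi
  -- the pointwise identity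
  have hid : (fun ω => max (f ω + g ω) 0 + (max (-f ω) 0 + max (-g ω) 0))
      = fun ω => max (-(f ω + g ω)) 0 + (max (f ω) 0 + max (g ω) 0) := by
    funext ω
    have h1 := max_zero_sub_max_neg_zero_eq_self (f ω)
    have h2 := max_zero_sub_max_neg_zero_eq_self (g ω)
    have h3 := max_zero_sub_max_neg_zero_eq_self (f ω + g ω)
    linarith
  have hL1 := genCEnn_add (μ := μ) hG hsp (pos0 _)
    (g := fun ω => max (-f ω) 0 + max (-g ω) 0) (hfn.add hgn)
    (fun ω => add_nonneg (le_max_right _ _) (le_max_right _ _))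
  have hL2 := genCEnn_add (μ := μ) hG hfn (pos0 _) hgn (pos0 _)
  have hR1 := genCEnn_add (μ := μ) hG hsn (pos0 _)
    (g := fun ω => max (f ω) 0 + max (g ω) 0) (hfp.add hgp)
    (fun ω => add_nonneg (le_max_right _ _) (le_max_right _ _))
  have hR2 := genCEnn_add (μ := μ) hG hfp (pos0 _) hgp (pos0 _)
  have hLR : genCEnn G μ (fun ω => max (f ω + g ω) 0 + (max (-f ω) 0 + max (-g ω) 0))
      = genCEnn G μ (fun ω => max (-(f ω + g ω)) 0 + (max (f ω) 0 + max (g ω) 0)) := by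
    rw [hid]
  filter_upwards [hL1, hL2, hR1, hR2, hspfin, hsnfin, hfpfin, hfnfin, hgpfin, hgnfin]
    with ω eL1 eL2 eR1 eR2 c1 c2 c3 c4 c5 c6
  have key : genCEnn G μ (fun ω' => max (f ω' + g ω') 0) ω
      + (genCEnn G μ (fun ω' => max (-f ω') 0) ω + genCEnn G μ (fun ω' => max (-g ω') 0) ω)
      = genCEnn G μ (fun ω' => max (-(f ω' + g ω')) 0) ω
      + (genCEnn G μ (fun ω' => max (f ω') 0) ω + genCEnn G μ (fun ω' => max (g ω') 0) ω) := by
    rw [← eL2, ← eL1, ← eR2, ← eR1, hLR]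
  have := congrArg ENNReal.toReal key
  rw [ENNReal.toReal_add c1.ne (ENNReal.add_lt_top.2 ⟨c4, c6⟩).ne,
    ENNReal.toReal_add c4.ne c6.ne,
    ENNReal.toReal_add c2.ne (ENNReal.add_lt_top.2 ⟨c3, c5⟩).ne,
    ENNReal.toReal_add c3.ne c5.ne] at this
  simp only [genCE]
  linarith


lemma real_cs_aux {a b m₀ : ℝ} (ha : 0 ≤ a) (hb : 0 ≤ b) (hm : 0 ≤ m₀)
    (h : ∀ q : ℚ, 0 < q → 2 * (q : ℝ) * m₀ ≤ (q : ℝ) ^ 2 * a + b) : m₀ ^ 2 ≤ a * b := by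
  have hreal : ∀ t : ℝ, 0 < t → 2 * t * m₀ ≤ t ^ 2 * a + b := by
    intro t ht
    have hev : ∀ ε : ℝ, 0 < ε → 2 * t * m₀ ≤ (t + ε) ^ 2 * a + b := by
      intro ε hε
      obtain ⟨q, hq1, hq2⟩ := exists_rat_btwn (show t < t + ε by linarith)
      have hq0 : (0 : ℚ) < q := by exact_mod_cast ht.trans hq1
      have h1 := h q hq0
      have h2 : 2 * t * m₀ ≤ 2 * (q : ℝ) * m₀ := by nlinarith
      have h3 : (q : ℝ) ^ 2 * a ≤ (t + ε) ^ 2 * a :=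
        mul_le_mul_of_nonneg_right (by nlinarith) ha
      linarith
    have hlim : Filter.Tendsto (fun ε : ℝ => (t + ε) ^ 2 * a + b) (nhdsWithin 0 (Set.Ioi 0))
        (nhds ((t + 0) ^ 2 * a + b)) := by
      apply Filter.Tendsto.mono_left _ nhdsWithin_le_nhds
      exact (((continuous_const.add continuous_id).pow 2).mul continuous_const).add
        continuous_const |>.tendsto 0
    have := ge_of_tendsto hlim (eventually_nhdsWithin_of_forall (fun ε hε => hev ε hε))
    simpa using this
  rcases eq_or_lt_of_le hm with hm0 | hm0
  · nlinarith
  rcases eq_or_lt_of_le ha with ha0 | ha0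
  · exfalso
    have := hreal ((b + 1) / (2 * m₀)) (by positivity)
    rw [← ha0] at this
    have h2 : 2 * ((b + 1) / (2 * m₀)) * m₀ = b + 1 := by field_simp
    nlinarith
  · have := hreal (m₀ / a) (by positivity)
    have ha' : a ≠ 0 := ne_of_gt ha0
    have h2 : 2 * (m₀ / a) * m₀ = 2 * m₀ ^ 2 / a := by ring
    have h3 : (m₀ / a) ^ 2 * a = m₀ ^ 2 / a := by field_simp
    rw [h2, h3] at this
    have h4 : m₀ ^ 2 / a ≤ b := by
      have := sub_nonneg.2 this
      have h5 : 2 * m₀ ^ 2 / a - m₀ ^ 2 / a = m₀ ^ 2 / a := by ring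
      nlinarith [div_nonneg (sq_nonneg m₀) (le_of_lt ha0)]
    calc m₀ ^ 2 = (m₀ ^ 2 / a) * a := by field_simp
    _ ≤ b * a := mul_le_mul_of_nonneg_right h4 ha
    _ = a * b := mul_comm _ _

lemma ennreal_cs_aux {A B M : ℝ≥0∞} (hA : A ≠ ∞) (hB : B ≠ ∞)
    (h : ∀ q : ℚ, 0 < q → ENNReal.ofReal (2 * (q : ℝ)) * M
      ≤ ENNReal.ofReal ((q : ℝ) ^ 2) * A + B) :
    M < ∞ ∧ M ^ 2 ≤ A * B := by
  have hM : M ≠ ∞ := by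
    intro hM
    have h1 := h 1 one_pos
    rw [hM] at h1
    have hmt : ENNReal.ofReal (2 * ((1 : ℚ) : ℝ)) * ∞ = ∞ := by
      rw [ENNReal.mul_top]
      simp [ENNReal.ofReal_eq_zero]
    rw [hmt] at h1
    have hfin : ENNReal.ofReal (((1 : ℚ) : ℝ) ^ 2) * A + B ≠ ∞ :=
      ENNReal.add_ne_top.2 ⟨ENNReal.mul_ne_top ENNReal.ofReal_ne_top hA, hB⟩
    exact hfin (top_le_iff.mp h1)
  refine ⟨hM.lt_top, ?_⟩
  have hq : ∀ q : ℚ, 0 < q → 2 * (q : ℝ) * M.toReal ≤ (q : ℝ) ^ 2 * A.toReal + B.toReal := by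
    intro q hq0
    have h1 := h q hq0
    have h2 := ENNReal.toReal_mono
      (ENNReal.add_ne_top.2 ⟨ENNReal.mul_ne_top ENNReal.ofReal_ne_top hA, hB⟩) h1
    have hq0' : (0 : ℝ) ≤ (q : ℝ) := by exact_mod_cast hq0.le
    rw [ENNReal.toReal_add (ENNReal.mul_ne_top ENNReal.ofReal_ne_top hA) hB,
      ENNReal.toReal_mul, ENNReal.toReal_mul,
      ENNReal.toReal_ofReal (by positivity), ENNReal.toReal_ofReal (by positivity)] at h2
    exact h2
  have hmain := real_cs_aux ENNReal.toReal_nonneg ENNReal.toReal_nonneg ENNReal.toReal_nonneg hq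
  have hM2 : M ^ 2 = ENNReal.ofReal (M.toReal ^ 2) := by
    rw [ENNReal.ofReal_pow ENNReal.toReal_nonneg, ENNReal.ofReal_toReal hM]
  have hAB : A * B = ENNReal.ofReal (A.toReal * B.toReal) := by
    rw [ENNReal.ofReal_mul ENNReal.toReal_nonneg, ENNReal.ofReal_toReal hA,
      ENNReal.ofReal_toReal hB]
  rw [hM2, hAB]
  exact ENNReal.ofReal_le_ofReal hmain


lemma genCEnn_CS [IsProbabilityMeasure μ] (hG : G ≤ m) {f g : Ω → ℝ}
    (hf : Measurable f) (hg : Measurable g)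
    (hf2 : ∀ᵐ ω ∂μ, genCEnn G μ (fun ω' => f ω' ^ 2) ω < ∞)
    (hg2 : ∀ᵐ ω ∂μ, genCEnn G μ (fun ω' => g ω' ^ 2) ω < ∞) :
    ∀ᵐ ω ∂μ, genCEnn G μ (fun ω' => |f ω' * g ω'|) ω < ∞ ∧
      genCEnn G μ (fun ω' => |f ω' * g ω'|) ω ^ 2
        ≤ genCEnn G μ (fun ω' => f ω' ^ 2) ω * genCEnn G μ (fun ω' => g ω' ^ 2) ω := by
  have habs : Measurable (fun ω => |f ω * g ω|) := (hf.mul hg).abs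
  have hf2m : Measurable (fun ω => f ω ^ 2) := hf.pow_const 2
  have hg2m : Measurable (fun ω => g ω ^ 2) := hg.pow_const 2
  have key : ∀ q : ℚ, 0 < q → ∀ᵐ ω ∂μ,
      ENNReal.ofReal (2 * (q : ℝ)) * genCEnn G μ (fun ω' => |f ω' * g ω'|) ω
        ≤ ENNReal.ofReal ((q : ℝ) ^ 2) * genCEnn G μ (fun ω' => f ω' ^ 2) ω
          + genCEnn G μ (fun ω' => g ω' ^ 2) ω := by
    intro q hq
    have hq0 : (0 : ℝ) < (q : ℝ) := by exact_mod_cast hq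
    have hpull1 := genCEnn_pullout (μ := μ) hG
      (measurable_const : Measurable[G] fun _ : Ω => 2 * (q : ℝ))
      (fun _ => by positivity) habs (fun ω => abs_nonneg _)
    have hpull2 := genCEnn_pullout (μ := μ) hG
      (measurable_const : Measurable[G] fun _ : Ω => (q : ℝ) ^ 2)
      (fun _ => by positivity) hf2m (fun ω => sq_nonneg _)
    have hadd := genCEnn_add (μ := μ) hG
      (f := fun ω => (q : ℝ) ^ 2 * f ω ^ 2) (g := fun ω => g ω ^ 2)
      (measurable_const.mul hf2m)
      (fun ω => by positivity) hg2m (fun ω => sq_nonneg _)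
    have hptwise : ∀ ω, 2 * (q : ℝ) * |f ω * g ω| ≤ (q : ℝ) ^ 2 * f ω ^ 2 + g ω ^ 2 := by
      intro ω
      nlinarith [sq_nonneg ((q : ℝ) * |f ω| - |g ω|), abs_nonneg (f ω), abs_nonneg (g ω),
        abs_mul (f ω) (g ω), sq_abs (f ω), sq_abs (g ω)]
    have hmono := genCEnn_mono (G := G) (μ := μ)
      (f := fun ω => 2 * (q : ℝ) * |f ω * g ω|)
      (g := fun ω => (q : ℝ) ^ 2 * f ω ^ 2 + g ω ^ 2)
      (measurable_const.mul habs) (fun ω => by positivity)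
      ((measurable_const.mul hf2m).add hg2m)
      (fun ω => by positivity) hptwise
    filter_upwards [hpull1, hpull2, hadd, hmono] with ω e1 e2 e3 e4
    calc ENNReal.ofReal (2 * (q : ℝ)) * genCEnn G μ (fun ω' => |f ω' * g ω'|) ω
        = genCEnn G μ (fun ω' => 2 * (q : ℝ) * |f ω' * g ω'|) ω := e1.symm
      _ ≤ genCEnn G μ (fun ω' => (q : ℝ) ^ 2 * f ω' ^ 2 + g ω' ^ 2) ω := e4
      _ = genCEnn G μ (fun ω' => (q : ℝ) ^ 2 * f ω' ^ 2) ω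
          + genCEnn G μ (fun ω' => g ω' ^ 2) ω := e3
      _ = ENNReal.ofReal ((q : ℝ) ^ 2) * genCEnn G μ (fun ω' => f ω' ^ 2) ω
          + genCEnn G μ (fun ω' => g ω' ^ 2) ω := by rw [e2]
  have key' : ∀ᵐ ω ∂μ, ∀ q : ℚ, 0 < q →
      ENNReal.ofReal (2 * (q : ℝ)) * genCEnn G μ (fun ω' => |f ω' * g ω'|) ω
        ≤ ENNReal.ofReal ((q : ℝ) ^ 2) * genCEnn G μ (fun ω' => f ω' ^ 2) ω
          + genCEnn G μ (fun ω' => g ω' ^ 2) ω := by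
    rw [ae_all_iff]
    intro q
    by_cases hq : 0 < q
    · filter_upwards [key q hq] with ω h _
      exact h
    · filter_upwards with ω hq'
      exact absurd hq' hq
  filter_upwards [key', hf2, hg2] with ω hω h2 h3
  exact ennreal_cs_aux h2.ne h3.ne hω

end Core

/-- **State price densities enforce the conditional law of one price** (Subsection 3.3).
If `E[Z|𝒢] = 1` and `E[Z²|𝒢] < ∞` a.s., then no indicator `𝟙_A` of a non-null `A ∈ 𝒢`
lies in the kernel `Ĝ = {W : E[W²|𝒢] < ∞, E[WZ|𝒢] = 0}`; moreover the minimal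
conditional distance of `1` from `Ĝ` is `1/E[Z²|𝒢]`, attained at `W = 1 − Z/E[Z²|𝒢]`. -/
theorem state_price_density_kernel {Ω : Type*} (G : MeasurableSpace Ω) [m : MeasurableSpace Ω]
    (μ : Measure Ω) [IsProbabilityMeasure μ] (hG : G ≤ m)
    (Z : Ω → ℝ) (hZmeas : Measurable Z)
    (hZ1 : genCE G μ Z =ᵐ[μ] 1)
    (hZ2 : ∀ᵐ ω ∂μ, genCEnn G μ (fun ω' => (Z ω') ^ 2) ω < ∞) :
    (∀ A : Set Ω, MeasurableSet[G] A → 0 < μ A →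
      ¬ (genCE G μ (fun ω => Set.indicator A (fun _ => (1 : ℝ)) ω * Z ω) =ᵐ[μ] 0)) ∧
    (∀ W : Ω → ℝ, Measurable W →
      (∀ᵐ ω ∂μ, genCEnn G μ (fun ω' => (W ω') ^ 2) ω < ∞) →
      (genCE G μ (fun ω => W ω * Z ω) =ᵐ[μ] 0) →
      ∀ᵐ ω ∂μ, ((genCEnn G μ (fun ω' => (Z ω') ^ 2) ω).toReal)⁻¹ ≤
        genCE G μ (fun ω' => (1 - W ω') ^ 2) ω) ∧
    (∀ᵐ ω ∂μ, genCEnn G μ (fun ω' =>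
        (1 - Z ω' / (genCEnn G μ (fun ω'' => (Z ω'') ^ 2) ω').toReal) ^ 2) ω < ∞) ∧
    (genCE G μ (fun ω =>
        (1 - Z ω / (genCEnn G μ (fun ω'' => (Z ω'') ^ 2) ω).toReal) * Z ω) =ᵐ[μ] 0) ∧
    (genCE G μ (fun ω =>
        (1 - (1 - Z ω / (genCEnn G μ (fun ω'' => (Z ω'') ^ 2) ω).toReal)) ^ 2) =ᵐ[μ]
      fun ω => ((genCEnn G μ (fun ω' => (Z ω') ^ 2) ω).toReal)⁻¹) := by
  have hZm : Measurable[m] Z := hZmeas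
  have mconst : ∀ x : ℝ, Measurable[m] (fun _ : Ω => x) := fun x => @measurable_const ℝ Ω _ m x
  have hZ2m : Measurable[m] (fun ω => Z ω ^ 2) := hZm.pow_const 2
  have habsZ : Measurable[m] (fun ω => |Z ω|) := measurable_abs.comp hZm
  have hmaxZ : Measurable[m] (fun ω => max (Z ω) 0) := hZm.max (mconst 0)
  have hmaxnZ : Measurable[m] (fun ω => max (-Z ω) 0) := hZm.neg.max (mconst 0)
  set c : Ω → ℝ≥0∞ := genCEnn G μ (fun ω' => Z ω' ^ 2) with hcdef
  have hrG : Measurable[G] (fun ω => (c ω).toReal) := (genCEnn_measurable _).ennreal_toReal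
  have hrm : Measurable[m] (fun ω => (c ω).toReal) := hrG.mono hG le_rfl
  -- the constant-one square function
  have eone : genCEnn G μ (fun _ : Ω => (1 : ℝ) ^ 2) = fun _ => 1 := by
    rw [show (fun _ : Ω => (1 : ℝ) ^ 2) = fun _ : Ω => (1 : ℝ) from funext fun _ => one_pow 2,
      genCEnn_const hG zero_le_one, ENNReal.ofReal_one]
  have hone2 : ∀ᵐ ω ∂μ, genCEnn G μ (fun _ : Ω => (1 : ℝ) ^ 2) ω < ∞ := by
    rw [eone]
    filter_upwards with ω
    exact ENNReal.one_lt_top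
  -- Cauchy-Schwarz for Z against 1
  have hCSZ := genCEnn_CS (μ := μ) hG (g := fun _ : Ω => (1 : ℝ)) hZm measurable_const hZ2 hone2
  simp only [mul_one, eone] at hCSZ
  -- positive/negative parts of Z
  have hPle : ∀ᵐ ω ∂μ, genCEnn G μ (fun ω' => max (Z ω') 0) ω
      ≤ genCEnn G μ (fun ω' => |Z ω'|) ω :=
    genCEnn_mono (G := G) (μ := μ) hmaxZ (fun ω => le_max_right _ _)
      habsZ (fun ω => abs_nonneg _) (fun ω => max_le (le_abs_self _) (abs_nonneg _))
  have hZ1' := hZ1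
  -- key facts about c and r
  have key1 : ∀ᵐ ω ∂μ, 1 ≤ c ω ∧ c ω ≠ ∞
      ∧ c ω = ENNReal.ofReal ((c ω).toReal) ∧ 1 ≤ (c ω).toReal := by
    filter_upwards [hCSZ, hPle, hZ1', hZ2] with ω hCS hP h1 hcfin
    obtain ⟨hMfin, hM2⟩ := hCS
    rw [Pi.one_apply] at h1
    have hN : 0 ≤ (genCEnn G μ (fun ω' => max (-Z ω') 0) ω).toReal := ENNReal.toReal_nonneg
    have h1'' : (genCEnn G μ (fun ω' => max (Z ω') 0) ω).toReal
        - (genCEnn G μ (fun ω' => max (-Z ω') 0) ω).toReal = 1 := h1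
    have h1P : 1 ≤ (genCEnn G μ (fun ω' => max (Z ω') 0) ω).toReal := by linarith
    have hMt : 1 ≤ (genCEnn G μ (fun ω' => |Z ω'|) ω).toReal :=
      le_trans h1P (ENNReal.toReal_mono hMfin.ne hP)
    have hM1 : 1 ≤ genCEnn G μ (fun ω' => |Z ω'|) ω := by
      rw [← ENNReal.ofReal_one]
      exact ENNReal.ofReal_le_of_le_toReal hMt
    have hMsq : (1 : ℝ≥0∞) ≤ genCEnn G μ (fun ω' => |Z ω'|) ω ^ 2 := by
      calc (1 : ℝ≥0∞) = 1 * 1 := (one_mul 1).symm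
      _ ≤ genCEnn G μ (fun ω' => |Z ω'|) ω * genCEnn G μ (fun ω' => |Z ω'|) ω :=
          mul_le_mul' hM1 hM1
      _ = genCEnn G μ (fun ω' => |Z ω'|) ω ^ 2 := (sq _).symm
    have h1c : 1 ≤ c ω := le_trans hMsq hM2
    refine ⟨h1c, hcfin.ne, (ENNReal.ofReal_toReal hcfin.ne).symm, ?_⟩
    have := ENNReal.toReal_mono hcfin.ne h1c
    rwa [ENNReal.toReal_one] at this
  -- shared material for parts 3-5
  have hqm : Measurable[m] (fun ω => 1 - Z ω / (c ω).toReal) := (mconst 1).sub (hZm.div hrm)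
  have hq2m : Measurable[m] (fun ω => (1 - Z ω / (c ω).toReal) ^ 2) := hqm.pow_const 2
  have hsG : Measurable[G] (fun ω => ((c ω).toReal ^ 2)⁻¹) := (hrG.pow_const 2).inv
  have hsm : Measurable[m] (fun ω => ((c ω).toReal ^ 2)⁻¹) := hsG.mono hG le_rfl
  have hs1G : Measurable[G] (fun ω => ((c ω).toReal)⁻¹) := hrG.inv
  have hs1m : Measurable[m] (fun ω => ((c ω).toReal)⁻¹) := hs1G.mono hG le_rfl
  have hsnn : ∀ ω, 0 ≤ ((c ω).toReal ^ 2)⁻¹ := fun ω => inv_nonneg.2 (sq_nonneg _)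
  have hs1nn : ∀ ω, 0 ≤ ((c ω).toReal)⁻¹ := fun ω => inv_nonneg.2 ENNReal.toReal_nonneg
  have hcompm : Measurable[m] (fun ω => 2 + 2 * ((c ω).toReal ^ 2)⁻¹ * Z ω ^ 2) :=
    (mconst 2).add (((mconst 2).mul hsm).mul hZ2m)
  have hpt3 : ∀ ω, (1 - Z ω / (c ω).toReal) ^ 2 ≤ 2 + 2 * ((c ω).toReal ^ 2)⁻¹ * Z ω ^ 2 := by
    intro ω
    have h1 : (Z ω / (c ω).toReal) ^ 2 = ((c ω).toReal ^ 2)⁻¹ * Z ω ^ 2 := by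
      rw [div_pow, div_eq_inv_mul]
    nlinarith [sq_nonneg (1 + Z ω / (c ω).toReal), h1]
  have hmono3 := genCEnn_mono (G := G) (μ := μ)
    (f := fun ω => (1 - Z ω / (c ω).toReal) ^ 2)
    (g := fun ω => 2 + 2 * ((c ω).toReal ^ 2)⁻¹ * Z ω ^ 2)
    hq2m (fun ω => sq_nonneg _) hcompm
    (fun ω => by positivity) hpt3
  have hadd3 := genCEnn_add (μ := μ) hG (f := fun _ : Ω => (2 : ℝ))
    (g := fun ω => 2 * ((c ω).toReal ^ 2)⁻¹ * Z ω ^ 2) (mconst 2) (fun _ => by norm_num)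
    (((mconst 2).mul hsm).mul hZ2m) (fun ω => by positivity)
  have hpull3 := genCEnn_pullout (μ := μ) hG
    (g := fun ω => 2 * ((c ω).toReal ^ 2)⁻¹)
    ((measurable_const.mul hsG : Measurable[G] _)) (fun ω => by positivity)
    hZ2m (fun ω => sq_nonneg _)
  have hpart3 : ∀ᵐ ω ∂μ, genCEnn G μ
      (fun ω' => (1 - Z ω' / (c ω').toReal) ^ 2) ω < ∞ := by
    have hc2 := genCEnn_const (μ := μ) hG (a := (2 : ℝ)) (by norm_num)
    have hassoc : (fun ω => 2 * ((c ω).toReal ^ 2)⁻¹ * Z ω ^ 2)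
        = fun ω => 2 * ((c ω).toReal ^ 2)⁻¹ * Z ω ^ 2 := rfl
    filter_upwards [hmono3, hadd3, hpull3, hZ2] with ω e1 e2 e3 hfin
    refine lt_of_le_of_lt e1 ?_
    rw [e2, e3, hc2]
    exact ENNReal.add_lt_top.2 ⟨ENNReal.ofReal_lt_top,
      ENNReal.mul_lt_top ENNReal.ofReal_lt_top hfin⟩
  -- genCE of v := t⁻¹ Z² equals 1 a.e.
  have hvm : Measurable[m] (fun ω => ((c ω).toReal)⁻¹ * Z ω ^ 2) := hs1m.mul hZ2m
  have hvnn : ∀ ω, 0 ≤ ((c ω).toReal)⁻¹ * Z ω ^ 2 :=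
    fun ω => mul_nonneg (hs1nn ω) (sq_nonneg _)
  have hpullv := genCEnn_pullout (μ := μ) hG (g := fun ω => ((c ω).toReal)⁻¹)
    hs1G hs1nn hZ2m (fun ω => sq_nonneg _)
  have hrepv := genCE_nonneg_rep (μ := μ) hG (f := fun ω => ((c ω).toReal)⁻¹ * Z ω ^ 2) hvnn
  beta_reduce at hpullv hadd3 hpull3
  have hv1 : ∀ᵐ ω ∂μ, genCE G μ (fun ω' => ((c ω').toReal)⁻¹ * Z ω' ^ 2) ω = 1 := by
    filter_upwards [hpullv, key1] with ω e1 hk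
    obtain ⟨h1c, hcfin, hcr, h1r⟩ := hk
    rw [hrepv]
    beta_reduce
    rw [e1, ENNReal.toReal_mul, ENNReal.toReal_ofReal (hs1nn ω)]
    have ht0 : (c ω).toReal ≠ 0 := ne_of_gt (lt_of_lt_of_le one_pos h1r)
    rw [inv_mul_cancel₀ ht0]
  have hvfin : ∀ᵐ ω ∂μ, genCEnn G μ
      (fun ω' => |((c ω').toReal)⁻¹ * Z ω' ^ 2|) ω < ∞ := by
    have eabs : (fun ω => |((c ω).toReal)⁻¹ * Z ω ^ 2|)
        = fun ω => ((c ω).toReal)⁻¹ * Z ω ^ 2 := funext fun ω => abs_of_nonneg (hvnn ω)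
    rw [eabs]
    filter_upwards [hpullv, hZ2] with ω e1 hfin
    rw [e1]
    exact ENNReal.mul_lt_top ENNReal.ofReal_lt_top hfin
  refine ⟨?_, ?_, ?_, ?_, ?_⟩
  -- Part 1: indicators of non-null G-sets are not in the kernel
  · intro A hA hApos hcontra
    have hiG : Measurable[G] (A.indicator (fun _ => (1 : ℝ))) :=
      measurable_const.indicator hA
    have hinn : 0 ≤ A.indicator (fun _ : Ω => (1 : ℝ)) :=
      fun ω => Set.indicator_nonneg (fun _ _ => zero_le_one) ω
    have epos : (fun ω => max (A.indicator (fun _ => (1 : ℝ)) ω * Z ω) 0)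
        = fun ω => A.indicator (fun _ => (1 : ℝ)) ω * max (Z ω) 0 := by
      funext ω
      by_cases hω : ω ∈ A <;> simp [hω]
    have eneg : (fun ω => max (-(A.indicator (fun _ => (1 : ℝ)) ω * Z ω)) 0)
        = fun ω => A.indicator (fun _ => (1 : ℝ)) ω * max (-Z ω) 0 := by
      funext ω
      by_cases hω : ω ∈ A <;> simp [hω]
    have hp := genCEnn_pullout (μ := μ) hG hiG hinn hmaxZ
      (fun ω => le_max_right _ _)
    have hn := genCEnn_pullout (μ := μ) hG hiG hinn hmaxnZ
      (fun ω => le_max_right _ _)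
    have hind : ∀ᵐ ω ∂μ, ω ∉ A := by
      filter_upwards [hp, hn, hZ1', hcontra] with ω e1 e2 h1 h0
      intro hω
      have hval : A.indicator (fun _ : Ω => (1 : ℝ)) ω = 1 := Set.indicator_of_mem hω _
      simp only [genCE, epos, eneg, e1, e2, hval, ENNReal.ofReal_one, one_mul,
        Pi.zero_apply] at h0
      have h1'' : (genCEnn G μ (fun ω' => max (Z ω') 0) ω).toReal
          - (genCEnn G μ (fun ω' => max (-Z ω') 0) ω).toReal = 1 := h1.trans (Pi.one_apply ω)
      rw [h0] at h1''
      exact one_ne_zero h1''.symm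
    have : μ A = 0 := by
      have h2 := ae_iff.mp hind
      refine measure_mono_null (fun ω hω => ?_) h2
      simp [hω]
    exact absurd this hApos.ne'
  -- Part 2: conditional distance lower bound
  · intro W hWmeas hW2 hWZ
    have hWm : Measurable[m] W := hWmeas
    have hW2m : Measurable[m] (fun ω => W ω ^ 2) := hWm.pow_const 2
    have hgm : Measurable[m] (fun ω => 1 - W ω) := (mconst 1).sub hWm
    have hg2m : Measurable[m] (fun ω => (1 - W ω) ^ 2) := hgm.pow_const 2
    have h2W2m : Measurable[m] (fun ω => 2 + 2 * W ω ^ 2) := (mconst 2).add ((mconst 2).mul hW2m)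
    have h2W2mul : Measurable[m] (fun ω => 2 * W ω ^ 2) := (mconst 2).mul hW2m
    have hpt1 : ∀ ω, (1 - W ω) ^ 2 ≤ 2 + 2 * W ω ^ 2 := fun ω => by nlinarith [sq_nonneg (1 + W ω)]
    -- genCEnn ((1-W)²) < ∞ a.e.
    have hbound := genCEnn_mono (G := G) (μ := μ)
      (f := fun ω => (1 - W ω) ^ 2) (g := fun ω => 2 + 2 * W ω ^ 2)
      hg2m (fun ω => sq_nonneg _) h2W2m
      (fun ω => by positivity) hpt1
    have hadd2 := genCEnn_add (μ := μ) hG (f := fun _ : Ω => (2 : ℝ))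
      (g := fun ω => 2 * W ω ^ 2) (mconst 2) (fun _ => by norm_num)
      h2W2mul (fun ω => by positivity)
    have hpull2 := genCEnn_pullout (μ := μ) hG
      (measurable_const : Measurable[G] fun _ : Ω => (2 : ℝ)) (fun _ => by norm_num)
      hW2m (fun ω => sq_nonneg _)
    have hg2fin : ∀ᵐ ω ∂μ, genCEnn G μ (fun ω' => (1 - W ω') ^ 2) ω < ∞ := by
      have hc2 := genCEnn_const (μ := μ) hG (a := (2 : ℝ)) (by norm_num)
      filter_upwards [hbound, hadd2, hpull2, hW2] with ω e1 e2 e3 e4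
      refine lt_of_le_of_lt e1 ?_
      rw [e2, e3, hc2]
      exact ENNReal.add_lt_top.2 ⟨ENNReal.ofReal_lt_top,
        ENNReal.mul_lt_top ENNReal.ofReal_lt_top e4⟩
    -- CS for (1-W) and Z, and for W and Z
    have hCSg := genCEnn_CS (μ := μ) hG (f := fun ω => 1 - W ω) (g := Z) hgm hZm hg2fin hZ2
    have hCSW := genCEnn_CS (μ := μ) hG (f := W) (g := Z) hWm hZm hW2 hZ2
    -- genCE ((1-W)Z) = 1 a.e.
    have hid : (fun ω => (1 - W ω) * Z ω + W ω * Z ω) = Z := by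
      funext ω; ring
    have haddCE := genCE_add (μ := μ) hG (f := fun ω => (1 - W ω) * Z ω)
      (g := fun ω => W ω * Z ω) (hgm.mul hZm) (hWm.mul hZm)
      (by filter_upwards [hCSg] with ω h; exact h.1)
      (by filter_upwards [hCSW] with ω h; exact h.1)
    rw [hid] at haddCE
    have hgZ1 : ∀ᵐ ω ∂μ, genCE G μ (fun ω' => (1 - W ω') * Z ω') ω = 1 := by
      filter_upwards [haddCE, hZ1, hWZ] with ω e1 e2 e3
      rw [e1] at e2
      rw [Pi.one_apply] at e2
      rw [Pi.zero_apply] at e3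
      rw [e3] at e2
      linarith
    -- positive part bound
    have hgZm : Measurable[m] (fun ω => (1 - W ω) * Z ω) := hgm.mul hZm
    have hmaxgZ : Measurable[m] (fun ω => max ((1 - W ω) * Z ω) 0) := hgZm.max (mconst 0)
    have habsgZ : Measurable[m] (fun ω => |(1 - W ω) * Z ω|) := measurable_abs.comp hgZm
    have hPle2 : ∀ᵐ ω ∂μ, genCEnn G μ (fun ω' => max ((1 - W ω') * Z ω') 0) ω
        ≤ genCEnn G μ (fun ω' => |(1 - W ω') * Z ω'|) ω :=
      genCEnn_mono (G := G) (μ := μ) hmaxgZ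
        (fun ω => le_max_right _ _) habsgZ (fun ω => abs_nonneg _)
        (fun ω => max_le (le_abs_self _) (abs_nonneg _))
    have hrep := genCE_nonneg_rep (μ := μ) hG (f := fun ω' => (1 - W ω') ^ 2)
      (fun ω => sq_nonneg _)
    filter_upwards [hCSg, hgZ1, hPle2, key1, hg2fin] with ω hCS h1 hP hkey hDfin
    obtain ⟨hMfin, hM2⟩ := hCS
    obtain ⟨h1c, hcfin, hcr, h1r⟩ := hkey
    have hN : 0 ≤ (genCEnn G μ (fun ω' => max (-((1 - W ω') * Z ω')) 0) ω).toReal :=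
      ENNReal.toReal_nonneg
    have h1'' : (genCEnn G μ (fun ω' => max ((1 - W ω') * Z ω') 0) ω).toReal
        - (genCEnn G μ (fun ω' => max (-((1 - W ω') * Z ω')) 0) ω).toReal = 1 := h1
    have h1P : 1 ≤ (genCEnn G μ (fun ω' => max ((1 - W ω') * Z ω') 0) ω).toReal := by
      linarith
    have hMt : 1 ≤ (genCEnn G μ (fun ω' => |(1 - W ω') * Z ω'|) ω).toReal :=
      le_trans h1P (ENNReal.toReal_mono hMfin.ne hP)
    have hM1 : 1 ≤ genCEnn G μ (fun ω' => |(1 - W ω') * Z ω'|) ω := by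
      rw [← ENNReal.ofReal_one]
      exact ENNReal.ofReal_le_of_le_toReal hMt
    have hMsq : (1 : ℝ≥0∞) ≤ genCEnn G μ (fun ω' => |(1 - W ω') * Z ω'|) ω ^ 2 := by
      calc (1 : ℝ≥0∞) = 1 * 1 := (one_mul 1).symm
      _ ≤ _ := mul_le_mul' hM1 hM1
      _ = _ := (sq _).symm
    have h1Dc : (1 : ℝ≥0∞) ≤ genCEnn G μ (fun ω' => (1 - W ω') ^ 2) ω * c ω :=
      le_trans hMsq hM2
    -- convert to reals
    have hprod := ENNReal.toReal_mono (ENNReal.mul_ne_top hDfin.ne hcfin) h1Dc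
    rw [ENNReal.toReal_mul, ENNReal.toReal_one] at hprod
    have hr0 : (0 : ℝ) < (c ω).toReal := lt_of_lt_of_le one_pos h1r
    rw [hrep]
    have hfin : (1 : ℝ) ≤ (genCEnn G μ (fun ω' => (1 - W ω') ^ 2) ω).toReal * (c ω).toReal :=
      hprod
    have := (div_le_iff₀ hr0).2 hfin
    rw [one_div] at this
    exact this
  -- Part 3
  · exact hpart3
  -- Part 4
  · have hCSq := genCEnn_CS (μ := μ) hG (f := fun ω => 1 - Z ω / (c ω).toReal) (g := Z)
      hqm hZm hpart3 hZ2
    have hum : Measurable[m] (fun ω => (1 - Z ω / (c ω).toReal) * Z ω) := hqm.mul hZm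
    have haddCE := genCE_add (μ := μ) hG
      (f := fun ω => (1 - Z ω / (c ω).toReal) * Z ω)
      (g := fun ω => ((c ω).toReal)⁻¹ * Z ω ^ 2) hum hvm
      (by filter_upwards [hCSq] with ω h; exact h.1) hvfin
    have hid : (fun ω => (1 - Z ω / (c ω).toReal) * Z ω + ((c ω).toReal)⁻¹ * Z ω ^ 2)
        = Z := by
      funext ω
      field_simp
      ring
    rw [hid] at haddCE
    filter_upwards [haddCE, hZ1, hv1] with ω e1 e2 e3
    rw [Pi.one_apply] at e2
    rw [e1, e3] at e2
    rw [Pi.zero_apply]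
    linarith
  -- Part 5
  · have efun : (fun ω => (1 - (1 - Z ω / (c ω).toReal)) ^ 2)
        = fun ω => ((c ω).toReal ^ 2)⁻¹ * Z ω ^ 2 := by
      funext ω
      rw [sub_sub_cancel, div_pow, div_eq_inv_mul]
    rw [efun]
    have hrep5 := genCE_nonneg_rep (μ := μ) hG
      (f := fun ω => ((c ω).toReal ^ 2)⁻¹ * Z ω ^ 2)
      (fun ω => mul_nonneg (hsnn ω) (sq_nonneg _))
    rw [hrep5]
    have hpull5 := genCEnn_pullout (μ := μ) hG (g := fun ω => ((c ω).toReal ^ 2)⁻¹)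
      hsG hsnn hZ2m (fun ω => sq_nonneg _)
    beta_reduce at hpull5
    filter_upwards [hpull5, key1] with ω e1 hk
    obtain ⟨h1c, hcfin, hcr, h1r⟩ := hk
    beta_reduce
    rw [e1, ENNReal.toReal_mul, ENNReal.toReal_ofReal (hsnn ω)]
    have ht0 : (c ω).toReal ≠ 0 := ne_of_gt (lt_of_lt_of_le one_pos h1r)
    field_simp
    ring
end

section
/- Let (Ω,ℱ,P) be a probability space, 𝒢 ⊆ ℱ a sub-σ-algebra, and G a linear subspace of L²(ℱ,P) that is stable under multiplication by bounded 𝒢-measurable random variables. Let h ∈ L²(ℱ,P) and suppose w* ∈ G satisfies E[(h − w*)·g] = 0 for all g ∈ G. Then E[(h − w*)·g | 𝒢] = 0 a.s. for all g ∈ G, and w* minimizes E[(h − w)²|𝒢] over w ∈ G: E[(h−w)²|𝒢] = E[(h−w*)²|𝒢] + E[(w−w*)²|𝒢] ≥ E[(h−w*)²|𝒢] a.s. for every w ∈ G. -/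
open MeasureTheory

/-!
Testing the first-order condition against `𝟙_s • g ∈ G` for `s ∈ 𝒢` shows that `(h - w*) g`
has zero integral over every `𝒢`-measurable set, i.e. `E[(h - w*) g | 𝒢] = 0`. Expanding
`h - w = (h - w*) - (w - w*)` with `w - w* ∈ G`, the cross term has vanishing conditional
expectation, which gives the conditional Pythagoras identity and hence the minimality of `w*`.
-/

section

variable {Ω : Type*} {m m₀ : MeasurableSpace Ω} {μ : Measure Ω}

theorem condExp_ae_eq_zero_of_forall_setIntegral_eq_zero {E : Type*} [NormedAddCommGroup E]
    [NormedSpace ℝ E] [CompleteSpace E] (hm : m ≤ m₀) [SigmaFinite (μ.trim hm)] {f : Ω → E}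
    (hf : Integrable f μ) (hzero : ∀ s, MeasurableSet[m] s → μ s < ⊤ → ∫ x in s, f x ∂μ = 0) :
    μ[f | m] =ᵐ[μ] 0 :=
  (ae_eq_condExp_of_forall_setIntegral_eq hm hf (fun _ _ _ => integrableOn_zero)
    (fun s hs hμs => by rw [hzero s hs hμs, integral_zero])
    stronglyMeasurable_zero.aestronglyMeasurable).symm

theorem setIntegral_mul_eq_integral_mul_indicator_mul {f g : Ω → ℝ} {s : Set Ω}
    (hs : MeasurableSet s) :
    ∫ x in s, f x * g x ∂μ = ∫ x, f x * (s.indicator 1 x * g x) ∂μ := by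
  rw [← integral_indicator hs]
  congr 1 with x
  by_cases hx : x ∈ s <;> simp [hx]

theorem condExp_mul_ae_eq_zero_of_integral_mul_indicator_mul_eq_zero (hm : m ≤ m₀)
    [SigmaFinite (μ.trim hm)] {f g : Ω → ℝ} (hfg : Integrable (fun x => f x * g x) μ)
    (horth : ∀ s, MeasurableSet[m] s → ∫ x, f x * (s.indicator 1 x * g x) ∂μ = 0) :
    μ[fun x => f x * g x | m] =ᵐ[μ] 0 :=
  condExp_ae_eq_zero_of_forall_setIntegral_eq_zero hm hfg fun s hs _ => by
    rw [setIntegral_mul_eq_integral_mul_indicator_mul (hm s hs), horth s hs]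

theorem condExp_sub_sq_ae_eq_add_of_condExp_mul_ae_eq_zero {a b : Ω → ℝ}
    (ha : MemLp a 2 μ) (hb : MemLp b 2 μ) (hab : μ[fun x => a x * b x | m] =ᵐ[μ] 0) :
    μ[fun x => (a x - b x) ^ 2 | m] =ᵐ[μ]
      fun x => μ[fun y => a y ^ 2 | m] x + μ[fun y => b y ^ 2 | m] x := by
  have hsq_a : Integrable (fun x => a x ^ 2) μ := ha.integrable_sq
  have hsq_b : Integrable (fun x => b x ^ 2) μ := hb.integrable_sq
  have hmul : Integrable (fun x => a x * b x) μ := ha.integrable_mul hb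
  have hexpand : (fun x => (a x - b x) ^ 2)
      = (fun x => a x ^ 2) + (fun x => b x ^ 2) - (2 : ℝ) • fun x => a x * b x := by
    funext x
    simp only [Pi.add_apply, Pi.sub_apply, Pi.smul_apply, smul_eq_mul]
    ring
  rw [hexpand]
  filter_upwards [condExp_sub (hsq_a.add hsq_b) (hmul.smul (2 : ℝ)) m,
    condExp_add hsq_a hsq_b m, condExp_smul (2 : ℝ) (fun x => a x * b x) m, hab]
    with x hsub hadd hsmul hcross
  simp only [Pi.add_apply, Pi.sub_apply, Pi.smul_apply, Pi.zero_apply, smul_eq_mul]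
    at hsub hadd hsmul hcross ⊢
  rw [hsub, hadd, hsmul, hcross, mul_zero, sub_zero]

end

/-- **Unconditional orthogonality upgrades to conditional orthogonality and the
conditional Pythagoras identity** (localization argument in Theorem 3.9). Let `G` be a
linear subspace of `L²` stable under multiplication by bounded `𝒢`-measurable random
variables, and let `w* ∈ G` satisfy `E[(h − w*)g] = 0` for all `g ∈ G`. Then
`E[(h−w*)g|𝒢] = 0` a.s. for every `g ∈ G`, and `w*` minimizes `E[(h−w)²|𝒢]` over
`w ∈ G` via `E[(h−w)²|𝒢] = E[(h−w*)²|𝒢] + E[(w−w*)²|𝒢]`. -/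
theorem conditional_projection_localization {Ω : Type*} [m : MeasurableSpace Ω]
    (μ : Measure Ω) [IsProbabilityMeasure μ] (G : MeasurableSpace Ω) (hG : G ≤ m)
    (Gsub : Submodule ℝ (Ω → ℝ)) (hL2 : ∀ g ∈ Gsub, MemLp g 2 μ)
    (hstable : ∀ g ∈ Gsub, ∀ a : Ω → ℝ, Measurable[G] a → (∃ c : ℝ, ∀ ω, |a ω| ≤ c) →
      (fun ω => a ω * g ω) ∈ Gsub)
    (h : Ω → ℝ) (hh : MemLp h 2 μ)
    (wstar : Ω → ℝ) (hws : wstar ∈ Gsub)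
    (hfoc : ∀ g ∈ Gsub, ∫ ω, (h ω - wstar ω) * g ω ∂μ = 0) :
    (∀ g ∈ Gsub, MeasureTheory.condExp G μ (fun ω => (h ω - wstar ω) * g ω) =ᵐ[μ] 0) ∧
    (∀ w ∈ Gsub,
      MeasureTheory.condExp G μ (fun ω => (h ω - w ω) ^ 2) =ᵐ[μ]
        fun ω => (MeasureTheory.condExp G μ fun ω' => (h ω' - wstar ω') ^ 2) ω +
          (MeasureTheory.condExp G μ fun ω' => (w ω' - wstar ω') ^ 2) ω) ∧
    (∀ w ∈ Gsub, ∀ᵐ ω ∂μ,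
      (MeasureTheory.condExp G μ fun ω' => (h ω' - wstar ω') ^ 2) ω ≤
        (MeasureTheory.condExp G μ fun ω' => (h ω' - w ω') ^ 2) ω) := by
  have hresL2 : MemLp (fun ω => h ω - wstar ω) 2 μ := hh.sub (hL2 wstar hws)
  have hindicator_mul_mem : ∀ g ∈ Gsub, ∀ s, MeasurableSet[G] s →
      (fun ω => s.indicator 1 ω * g ω) ∈ Gsub := fun g hg s hs =>
    hstable g hg _ (measurable_const.indicator hs)
      ⟨1, fun ω => by by_cases hω : ω ∈ s <;> simp [hω]⟩
  have horth : ∀ g ∈ Gsub, μ[fun ω => (h ω - wstar ω) * g ω | G] =ᵐ[μ] 0 := fun g hg =>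
    condExp_mul_ae_eq_zero_of_integral_mul_indicator_mul_eq_zero hG
      (hresL2.integrable_mul (hL2 g hg)) fun s hs => hfoc _ (hindicator_mul_mem g hg s hs)
  have hpyth : ∀ w ∈ Gsub, μ[fun ω => (h ω - w ω) ^ 2 | G] =ᵐ[μ]
      fun ω => μ[fun ω' => (h ω' - wstar ω') ^ 2 | G] ω +
        μ[fun ω' => (w ω' - wstar ω') ^ 2 | G] ω := fun w hw => by
    simpa only [Pi.sub_apply, sub_sub_sub_cancel_right] using
      condExp_sub_sq_ae_eq_add_of_condExp_mul_ae_eq_zero hresL2 ((hL2 w hw).sub (hL2 wstar hws))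
        (horth _ (Gsub.sub_mem hw hws))
  refine ⟨horth, hpyth, fun w hw => ?_⟩
  filter_upwards [hpyth w hw, condExp_nonneg (m := G) (μ := μ)
    (f := fun ω => (w ω - wstar ω) ^ 2) (.of_forall fun _ => sq_nonneg _)] with ω hω hnonneg
  rw [hω]
  exact le_add_of_nonneg_right hnonneg
end
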